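/- arXiv:1303.4197 — 8 statements merged into one kernel-verified Lean document; each statement's English description precedes it below -/
import Mathlib

section
/- Let K be a centrally symmetric convex body in ℝⁿ and let P be a closed polygonal path that passes through two points x, y with ‖x‖_K ≥ 1 and ‖y‖_K ≥ 1, and through two antipodal points z and −z such that x and y lie in different connected components of P ∖ {z, −z}. Then the length of P measured in the norm ‖·‖_K is at least 4. -/
/-!
Join `-z` to `x` to `z` and `z` to `y` to `-z`: by the triangle inequality the first detour
has length at least `‖(x + z) + (x - z)‖_K = 2 ‖x‖_K` and the second at least `2 ‖y‖_K`, while the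
polygon is at least as long as the inscribed quadrilateral `x, z, y, -z`.
-/

open Finset

/-- The `K`-length of the closed polygon with vertices `x 0, x 1, …, x (m-1)`
(in this cyclic order), measured with the gauge (Minkowski functional) of `K`. -/
noncomputable def KLength {n : ℕ} (K : Set (EuclideanSpace ℝ (Fin n))) (m : ℕ)
    (x : ℕ → EuclideanSpace ℝ (Fin n)) : ℝ :=
  ∑ i ∈ Finset.range m, gauge K (x ((i + 1) % m) - x i)

section ClosedPolygon

variable {E F : Type*} [AddCommGroup E] [FunLike F E ℝ] [AddGroupSeminormClass F E ℝ] (p : F)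

theorem map_sub_le_sum_Ico (g : ℕ → E) {a b : ℕ} (hab : a ≤ b) :
    p (g b - g a) ≤ ∑ i ∈ Ico a b, p (g (i + 1) - g i) := by
  rw [← sum_Ico_sub g hab]
  exact le_sum_of_subadditive p (map_zero p).le (map_add_le_add p) _ _

theorem quadrilateral_le_closedPolygon (v : ℕ → E) {a b c d m : ℕ}
    (hab : a ≤ b) (hbc : b ≤ c) (hcd : c ≤ d) (hdm : d < m) :
    p (v b - v a) + p (v c - v b) + p (v d - v c) + p (v a - v d) ≤
      ∑ i ∈ range m, p (v ((i + 1) % m) - v i) := by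
  set g : ℕ → E := fun i => v (i % m)
  have hg : ∀ i < m, g i = v i := fun i hi => congrArg v (Nat.mod_eq_of_lt hi)
  have hgm : g m = g 0 := by simp [g]
  have hsum : ∑ i ∈ range m, p (v ((i + 1) % m) - v i) = ∑ i ∈ range m, p (g (i + 1) - g i) :=
    sum_congr rfl fun i hi => by rw [hg i (mem_range.1 hi)]
  have hwrap : p (v a - v d) ≤ p (g a - g 0) + p (g m - g d) := by
    rw [hgm, ← hg a (by omega), ← hg d hdm]
    simpa only [sub_add_sub_cancel] using map_add_le_add p (g a - g 0) (g 0 - g d)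
  have h₀ := map_sub_le_sum_Ico p g (Nat.zero_le a)
  have h₁ := map_sub_le_sum_Ico p g hab
  have h₂ := map_sub_le_sum_Ico p g hbc
  have h₃ := map_sub_le_sum_Ico p g hcd
  have h₄ := map_sub_le_sum_Ico p g hdm.le
  rw [hg a (by omega), hg b (by omega)] at h₁
  rw [hg b (by omega), hg c (by omega)] at h₂
  rw [hg c (by omega), hg d hdm] at h₃
  rw [hsum, range_eq_Ico, ← sum_Ico_consecutive _ (Nat.zero_le a) (by omega : a ≤ m),
    ← sum_Ico_consecutive _ hab (by omega : b ≤ m), ← sum_Ico_consecutive _ hbc (by omega : c ≤ m),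
    ← sum_Ico_consecutive _ hcd hdm.le]
  linarith

end ClosedPolygon

namespace Seminorm

variable {E : Type*} [AddCommGroup E] [Module ℝ E] (p : Seminorm ℝ E)

theorem two_mul_le_map_sub_add_map_add (x z : E) : 2 * p x ≤ p (x - z) + p (x + z) := by
  have h : (x - z) + (x + z) = (2 : ℝ) • x := by rw [two_smul]; abel
  calc 2 * p x = p ((x - z) + (x + z)) := by rw [h, map_smul_eq_mul, Real.norm_two]
    _ ≤ p (x - z) + p (x + z) := map_add_le_add p _ _

theorem two_mul_add_le_quadrilateral (x y z : E) :
    2 * (p x + p y) ≤ p (z - x) + p (y - z) + p (-z - y) + p (x - -z) := by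
  rw [map_sub_rev p z x, sub_neg_eq_add, ← neg_add', map_neg_eq_map, add_comm z y]
  linarith [p.two_mul_le_map_sub_add_map_add x z, p.two_mul_le_map_sub_add_map_add y z]

end Seminorm

theorem stmt0_general {n m : ℕ} (K : Set (EuclideanSpace ℝ (Fin n)))
    (hKconv : Convex ℝ K) (hK0 : (0 : EuclideanSpace ℝ (Fin n)) ∈ interior K)
    (hKsymm : K = -K)
    (v : ℕ → EuclideanSpace ℝ (Fin n)) (x y z : EuclideanSpace ℝ (Fin n))
    (a b c d : ℕ) (hab : a < b) (hbc : b < c) (hcd : c < d) (hdm : d < m)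
    (hva : v a = x) (hvb : v b = z) (hvc : v c = y) (hvd : v d = -z)
    (hx : 1 ≤ gauge K x) (hy : 1 ≤ gauge K y) :
    4 ≤ KLength K m v := by
  have hKbal : Balanced ℝ K :=
    (balanced_iff_neg_mem hKconv).2 fun w hw => hKsymm ▸ Set.neg_mem_neg.2 hw
  let p := gaugeSeminorm hKbal hKconv (absorbent_nhds_zero (mem_interior_iff_mem_nhds.1 hK0))
  have hquad := quadrilateral_le_closedPolygon p v hab.le hbc.le hcd.le hdm
  rw [hva, hvb, hvc, hvd] at hquad
  have hdetours := p.two_mul_add_le_quadrilateral x y z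
  change 1 ≤ p x at hx
  change 1 ≤ p y at hy
  show 4 ≤ ∑ i ∈ range m, p (v ((i + 1) % m) - v i)
  linarith

/-- A closed polygonal path passing through `x`, `z`, `y`, `-z` in this cyclic order,
with `‖x‖_K ≥ 1` and `‖y‖_K ≥ 1` (so `x` and `y` lie in different components of
the path minus `{z, -z}`), has `K`-length at least `4`. -/
theorem stmt0 {n m : ℕ} (K : Set (EuclideanSpace ℝ (Fin n)))
    (hKconv : Convex ℝ K) (hKcpt : IsCompact K) (hK0 : (0 : EuclideanSpace ℝ (Fin n)) ∈ interior K)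
    (hKsymm : K = -K)
    (v : ℕ → EuclideanSpace ℝ (Fin n)) (x y z : EuclideanSpace ℝ (Fin n))
    (a b c d : ℕ) (hab : a < b) (hbc : b < c) (hcd : c < d) (hdm : d < m)
    (hva : v a = x) (hvb : v b = z) (hvc : v c = y) (hvd : v d = -z)
    (hx : 1 ≤ gauge K x) (hy : 1 ≤ gauge K y) :
    4 ≤ KLength K m v :=
  stmt0_general K hKconv hK0 hKsymm v x y z a b c d hab hbc hcd hdm hva hvb hvc hvd hx hy
end

section
/- Let K be a centrally symmetric convex body in ℝⁿ, let x₁,…,x_m ∈ ℝⁿ, and let z be a point in the convex hull of {x₁,…,x_m}. Then the K-length of the closed polygon x₁x₂⋯x_m is at least the K-length of the triangle x₁ z x_m, i.e. ‖x₁−x_m‖_K + Σ_{i=1}^{m−1}‖x_{i+1}−x_i‖_K ≥ ‖z−x₁‖_K + ‖x_m−z‖_K + ‖x₁−x_m‖_K. -/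
/-!
The function `y ↦ ‖y - x₁‖_K + ‖x_m - y‖_K` is convex, so on the convex hull of the vertices it
is maximised at some vertex `x_j`. There it is bounded, by the triangle inequality, by the length of
the open path `x₁ x₂ ⋯ x_m`, and the closing edge `x_m x₁` is common to both sides.
-/

open Finset

section Gauge

variable {E : Type*} [AddCommGroup E] [Module ℝ E] {s : Set E}

theorem convexOn_gauge (hs : Convex ℝ s) (habs : Absorbent ℝ s) : ConvexOn ℝ Set.univ (gauge s) :=
  ⟨convex_univ, fun p _ q _ a b ha hb _ => (gauge_add_le hs habs _ _).trans_eq <| by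
    rw [gauge_smul_of_nonneg ha, gauge_smul_of_nonneg hb, smul_eq_mul, smul_eq_mul]⟩

theorem convexOn_gauge_sub_right (hs : Convex ℝ s) (habs : Absorbent ℝ s) (a : E) :
    ConvexOn ℝ Set.univ fun y => gauge s (y - a) := by
  simpa [Function.comp_def, sub_eq_neg_add] using (convexOn_gauge hs habs).translate_right (-a)

theorem convexOn_gauge_sub_left (hs : Convex ℝ s) (habs : Absorbent ℝ s) (a : E) :
    ConvexOn ℝ Set.univ fun y => gauge s (a - y) := by
  simpa [Function.comp_def, sub_eq_add_neg] using
    ((convexOn_gauge hs habs).translate_right a).comp_linearMap (-LinearMap.id)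

theorem gauge_sub_le_sum_Ico (hs : Convex ℝ s) (habs : Absorbent ℝ s) (x : ℕ → E) {a b : ℕ}
    (hab : a ≤ b) : gauge s (x b - x a) ≤ ∑ i ∈ Ico a b, gauge s (x (i + 1) - x i) := by
  rw [← sum_Ico_sub x hab]
  exact gauge_sum_le hs habs _ _

theorem gauge_sub_add_gauge_sub_le_sum_range (hs : Convex ℝ s) (habs : Absorbent ℝ s)
    (x : ℕ → E) {j N : ℕ} (hjN : j ≤ N) :
    gauge s (x j - x 0) + gauge s (x N - x j) ≤ ∑ i ∈ range N, gauge s (x (i + 1) - x i) := by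
  rw [range_eq_Ico, ← sum_Ico_consecutive _ j.zero_le hjN]
  exact add_le_add (gauge_sub_le_sum_Ico hs habs x j.zero_le) (gauge_sub_le_sum_Ico hs habs x hjN)

end Gauge

theorem KLength_eq_sum_range_add {n m : ℕ} (K : Set (EuclideanSpace ℝ (Fin n))) (hm : m ≠ 0)
    (x : ℕ → EuclideanSpace ℝ (Fin n)) :
    KLength K m x = ∑ i ∈ range (m - 1), gauge K (x (i + 1) - x i) + gauge K (x 0 - x (m - 1)) := by
  obtain ⟨k, rfl⟩ := Nat.exists_eq_add_one_of_ne_zero hm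
  rw [KLength, sum_range_succ, Nat.add_sub_cancel, Nat.mod_self]
  congr 1
  exact sum_congr rfl fun i hi => by rw [Nat.mod_eq_of_lt (by simpa using hi)]

theorem stmt1_general {n m : ℕ} (K : Set (EuclideanSpace ℝ (Fin n)))
    (hKconv : Convex ℝ K) (hK0 : (0 : EuclideanSpace ℝ (Fin n)) ∈ interior K)
    (x : ℕ → EuclideanSpace ℝ (Fin n)) (z : EuclideanSpace ℝ (Fin n))
    (hz : z ∈ convexHull ℝ (x '' Set.Iio m)) :
    gauge K (z - x 0) + gauge K (x (m - 1) - z) + gauge K (x 0 - x (m - 1)) ≤ KLength K m x := by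
  have habs : Absorbent ℝ K := absorbent_nhds_zero (mem_interior_iff_mem_nhds.mp hK0)
  obtain ⟨_, ⟨j, hj, rfl⟩, hzj⟩ :=
    ((convexOn_gauge_sub_right hKconv habs (x 0)).add
      (convexOn_gauge_sub_left hKconv habs (x (m - 1)))).exists_ge_of_mem_convexHull
      (Set.subset_univ _) hz
  rw [KLength_eq_sum_range_add K (Nat.ne_zero_of_lt hj)]
  gcongr
  exact hzj.trans (gauge_sub_add_gauge_sub_le_sum_range hKconv habs x (Nat.le_sub_one_of_lt hj))

/-- If `z` lies in the convex hull of the vertices `x 0, …, x (m-1)`, then the `K`-length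
of the closed polygon `x 0 x 1 ⋯ x (m-1)` is at least the `K`-length of the closed
triangle `x 0, z, x (m-1)`. -/
theorem stmt1 {n m : ℕ} (K : Set (EuclideanSpace ℝ (Fin n)))
    (hKconv : Convex ℝ K) (hKcpt : IsCompact K) (hK0 : (0 : EuclideanSpace ℝ (Fin n)) ∈ interior K)
    (hKsymm : K = -K) (hm : 1 ≤ m)
    (x : ℕ → EuclideanSpace ℝ (Fin n)) (z : EuclideanSpace ℝ (Fin n))
    (hz : z ∈ convexHull ℝ (x '' Set.Iio m)) :
    gauge K (z - x 0) + gauge K (x (m - 1) - z) + gauge K (x 0 - x (m - 1)) ≤ KLength K m x :=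
  stmt1_general K hKconv hK0 x z hz
end

section
/- Let x₁,…,x_m ∈ ℝⁿ with m ≥ 3 and suppose 0 lies in the convex hull of {x₁,…,x_m}. Then there exist indices 1 ≤ i₀ < j₀ ≤ m such that the convex hull of {x_{i₀}, x_{i₀+1}, …, x_{j₀}} intersects the negative of the convex hull of {x_{j₀}, x_{j₀+1}, …, x_m, x₁, …, x_{i₀−1}, x_{i₀}} (indices taken cyclically); that is, there exists p with p ∈ conv{x_{i₀},…,x_{j₀}} and −p ∈ conv{x_{j₀},…,x_{i₀}} (cyclically). -/
/-!
Write `0 = ∑ lᵢ xᵢ` with `lᵢ ≥ 0`, `∑ lᵢ = 1`, and let `j` be the index at which the partial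
sums of the weights cross `1/2`. Splitting `l_j` so that each side of `j` carries total
weight exactly `1/2`, twice the first half is a convex combination `p` of `x₀, …, x_j`, and
twice the second half, which equals `-p`, is a convex combination of `x_j, …, x_{m-1}`.
Hence `i₀ = 0` works (with `j₀ = max j 1`).
-/

open Finset

theorem Finset.exists_sum_range_le_le_sum_range_succ {α : Type*} [AddCommMonoid α]
    [LinearOrder α] {f : ℕ → α} {a : α} {m : ℕ} (hm : 0 < m) (ha : 0 ≤ a)
    (ham : a ≤ ∑ i ∈ range m, f i) :
    ∃ j < m, ∑ i ∈ range j, f i ≤ a ∧ a ≤ ∑ i ∈ range (j + 1), f i := by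
  induction m with
  | zero => omega
  | succ k ih =>
    by_cases h : 0 < k ∧ a ≤ ∑ i ∈ range k, f i
    · obtain ⟨j, hjk, hj⟩ := ih h.1 h.2
      exact ⟨j, by omega, hj⟩
    · refine ⟨k, lt_add_one k, ?_, ham⟩
      rcases Nat.eq_zero_or_pos k with rfl | hk
      · simpa using ha
      · exact (not_le.1 fun h' ↦ h ⟨hk, h'⟩).le

theorem Finset.sum_range_eq_add_add_sum_Ioo {M : Type*} [AddCommMonoid M] (f : ℕ → M)
    {j m : ℕ} (hjm : j < m) :
    ∑ i ∈ range m, f i = ∑ i ∈ range j, f i + f j + ∑ i ∈ Ioo j m, f i := by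
  rw [← sum_range_add_sum_Ico f hjm.le, ← Ioo_insert_left hjm, sum_insert left_notMem_Ioo,
    add_assoc]

section Convex

variable {R E ι : Type*} [Field R] [LinearOrder R] [IsStrictOrderedRing R]
  [AddCommGroup E] [Module R E]

theorem Finset.exists_sum_smul_eq_of_mem_convexHull_image {s : Finset ι} {x : ι → E} {y : E}
    (hy : y ∈ convexHull R (x '' s)) :
    ∃ w : ι → R, (∀ i ∈ s, 0 ≤ w i) ∧ ∑ i ∈ s, w i = 1 ∧ ∑ i ∈ s, w i • x i = y := by
  classical
  rw [← coe_image, mem_convexHull'] at hy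
  obtain ⟨v, hv0, hv1, rfl⟩ := hy
  have : Nonempty ι := by
    by_contra! h
    simp [s.eq_empty_of_isEmpty] at hv1
  -- put the weight of each point `z` on one chosen index `g z` of its fibre
  choose! g hgs hxg using fun z (hz : z ∈ s.image x) ↦ mem_image.1 hz
  set T := (s.image x).image g
  have hTs : T ⊆ s := image_subset_iff.2 hgs
  have hxT : Set.InjOn x T := by
    intro i hi i' hi' h
    obtain ⟨z, hz, rfl⟩ := mem_image.1 hi
    obtain ⟨z', hz', rfl⟩ := mem_image.1 hi'
    rw [hxg z hz, hxg z' hz'] at h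
    rw [h]
  have hTx : T.image x = s.image x := by
    rw [image_image, image_congr (f := x ∘ g) (g := id) fun z hz ↦ hxg z hz, image_id]
  refine ⟨fun i ↦ if i ∈ T then v (x i) else 0,
    fun i hi ↦ ite_nonneg (hv0 _ (mem_image_of_mem x hi)) le_rfl, ?_, ?_⟩
  · rw [sum_ite_mem, inter_eq_right.2 hTs, ← sum_image hxT, hTx, hv1]
  · simp only [ite_smul, zero_smul]
    rw [sum_ite_mem, inter_eq_right.2 hTs, ← sum_image (f := fun z ↦ v z • z) hxT, hTx]

theorem sum_smul_add_smul_mem_convexHull_insert [DecidableEq ι] {s : Finset ι} {k : ι}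
    (hk : k ∉ s) (x : ι → E) {w : ι → R} {c : R} (hw : ∀ i ∈ s, 0 ≤ w i) (hc : 0 ≤ c)
    (h1 : ∑ i ∈ s, w i + c = 1) :
    ∑ i ∈ s, w i • x i + c • x k ∈ convexHull R (x '' ↑(insert k s)) := by
  have hupd : ∀ i ∈ s, Function.update w k c i = w i :=
    fun i hi ↦ Function.update_of_ne (ne_of_mem_of_not_mem hi hk) _ _
  have hmem := (convex_convexHull R (x '' ↑(insert k s))).sum_mem
    (t := insert k s) (w := Function.update w k c) (z := x) ?_ ?_
    fun i hi ↦ subset_convexHull R _ (Set.mem_image_of_mem x hi)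
  · rwa [sum_insert hk, Function.update_self, sum_congr rfl fun i hi ↦ by rw [hupd i hi],
      add_comm] at hmem
  · intro i hi
    rcases mem_insert.1 hi with rfl | hi
    · rwa [Function.update_self]
    · rw [hupd i hi]; exact hw i hi
  · rw [sum_insert hk, Function.update_self, sum_congr rfl hupd, add_comm, h1]

theorem exists_mem_convexHull_neg_mem_convexHull_of_sum_range_smul_eq_zero
    {x : ℕ → E} {l : ℕ → R} {m j : ℕ} (hl0 : ∀ i ∈ range m, 0 ≤ l i)
    (hl1 : ∑ i ∈ range m, l i = 1) (hlx : ∑ i ∈ range m, l i • x i = 0) (hjm : j < m)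
    (hbelow : ∑ i ∈ range j, l i ≤ 1 / 2) (habove : 1 / 2 ≤ ∑ i ∈ range (j + 1), l i) :
    ∃ p, p ∈ convexHull R (x '' ↑(range (j + 1))) ∧ -p ∈ convexHull R (x '' ↑(Ico j m)) := by
  set a := ∑ i ∈ range j, l i
  rw [sum_range_succ] at habove
  rw [sum_range_eq_add_add_sum_Ioo _ hjm] at hl1 hlx
  -- the weight `l j` of the median index is split as `(1/2 - a) + (a + l j - 1/2)`
  refine ⟨∑ i ∈ range j, (2 * l i) • x i + (1 - 2 * a) • x j, ?_, ?_⟩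
  · rw [range_add_one]
    refine sum_smul_add_smul_mem_convexHull_insert notMem_range_self x
      (fun i hi ↦ mul_nonneg zero_le_two (hl0 i (range_subset_range.2 hjm.le hi)))
      (by linarith) ?_
    rw [← mul_sum]
    ring
  · have hneg : -(∑ i ∈ range j, (2 * l i) • x i + (1 - 2 * a) • x j) =
        ∑ i ∈ Ioo j m, (2 * l i) • x i + (2 * (a + l j) - 1) • x j := by
      simp only [mul_smul, ← smul_sum]
      linear_combination (norm := module) (-2 : R) • hlx
    rw [hneg, ← Ioo_insert_left hjm]
    refine sum_smul_add_smul_mem_convexHull_insert left_notMem_Ioo x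
      (fun i hi ↦ mul_nonneg zero_le_two (hl0 i (mem_range.2 (mem_Ioo.1 hi).2)))
      (by linarith) ?_
    rw [← mul_sum]
    linear_combination 2 * hl1

end Convex

/-- If `0` lies in the convex hull of points `x 0, …, x (m-1)` (`m ≥ 3`, in a fixed
cyclic order), then there are indices `i₀ < j₀ < m` and a point `p` lying in the convex
hull of the cyclic block `x i₀, …, x j₀`, with `-p` lying in the convex hull of the
complementary cyclic block `x j₀, …, x (m-1), x 0, …, x i₀`. -/
theorem stmt2 {n m : ℕ} (hm : 3 ≤ m) (x : ℕ → EuclideanSpace ℝ (Fin n))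
    (h0 : (0 : EuclideanSpace ℝ (Fin n)) ∈ convexHull ℝ (x '' Set.Iio m)) :
    ∃ i₀ j₀ : ℕ, i₀ < j₀ ∧ j₀ < m ∧
      ∃ p : EuclideanSpace ℝ (Fin n),
        p ∈ convexHull ℝ (x '' Set.Icc i₀ j₀) ∧
        -p ∈ convexHull ℝ (x '' (Set.Icc j₀ (m - 1) ∪ Set.Icc 0 i₀)) := by
  rw [← coe_range] at h0
  obtain ⟨l, hl0, hl1, hlx⟩ := exists_sum_smul_eq_of_mem_convexHull_image h0
  obtain ⟨j, hjm, hbelow, habove⟩ :=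
    exists_sum_range_le_le_sum_range_succ (f := l) (m := m) (by omega)
      (by norm_num : (0 : ℝ) ≤ 1 / 2) (by rw [hl1]; norm_num)
  obtain ⟨p, hp, hnp⟩ :=
    exists_mem_convexHull_neg_mem_convexHull_of_sum_range_smul_eq_zero hl0 hl1 hlx hjm
      hbelow habove
  refine ⟨0, max j 1, by omega, by omega, p, convexHull_mono (Set.image_mono ?_) hp,
    convexHull_mono (Set.image_mono ?_) hnp⟩ <;> intro i <;> simp <;> omega
end

section
/- Let K be a centrally symmetric convex body in ℝⁿ and let x₁,…,x_m (m ≥ 2) be points lying outside the interior of K (i.e. ‖x_i‖_K ≥ 1 for all i), with consecutive points distinct, such that 0 lies in the convex hull of {x₁,…,x_m}. Then the K-length of the closed polygon x₁x₂⋯x_m is at least 4. -/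
/-!
Write `0 = ∑ λᵢ xᵢ` as a convex combination. Since `xᵢ = ∑ⱼ λⱼ (xᵢ - xⱼ)`,
`1 ≤ ∑ λᵢ ‖xᵢ‖ ≤ ∑ᵢⱼ λᵢ λⱼ ‖xᵢ - xⱼ‖`, and `‖xᵢ - xⱼ‖` is at most the distance of the two
vertices along the polygon, i.e. the distance of their arclength parameters on a circle of
length `L`. The circle metric embeds in `L¹` through its cuts into antipodal half-circles; for
each cut the weighted mean `∑ᵢⱼ λᵢ λⱼ |aᵢ - aⱼ|` of `0/1`-values is `2A(1 - A) ≤ 1/2`, and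
integrating over the cuts bounds the mean circle distance by `L/4`. Hence `L ≥ 4`.
-/

open Finset

section CircleCuts

open Set MeasureTheory

/-- The distance between the points `a` and `b` of the circle `ℝ ⧸ Lℤ`, for `|a - b| ≤ L`. -/
noncomputable def circleDist (L a b : ℝ) : ℝ := min |a - b| (L - |a - b|)

/-- `halfCircleCut L s u = 1` iff `s ∈ [u, u + L/2)`. As `u` runs over `(0, L/2]`, these
half-circles and their complements are exactly the cuts of `ℝ ⧸ Lℤ` into two antipodal arcs,
and the measure of the cuts separating two points is their circle distance. -/
noncomputable def halfCircleCut (L s u : ℝ) : ℝ := (Ioc (s - L / 2) s).indicator 1 u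

lemma intervalIntegrable_indicator_Ioc_one (p q a b : ℝ) :
    IntervalIntegrable ((Ioc p q).indicator (1 : ℝ → ℝ)) volume a b :=
  ((integrable_indicator_iff measurableSet_Ioc).2 (integrableOn_const (by simp))).intervalIntegrable

lemma integral_indicator_Ioc_one {a b p q : ℝ} (hap : a ≤ p) (hpq : p ≤ q) (hqb : q ≤ b) :
    ∫ u in a..b, (Ioc p q).indicator (1 : ℝ → ℝ) u = q - p := by
  rw [intervalIntegral.integral_of_le (hap.trans (hpq.trans hqb)),
    integral_indicator_one measurableSet_Ioc, measureReal_restrict_apply measurableSet_Ioc,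
    inter_eq_left.2 (Ioc_subset_Ioc hap hqb), Real.volume_real_Ioc_of_le hpq]

lemma sub_add_sub_le_integral {f : ℝ → ℝ} {a b p q p' q' : ℝ}
    (hf : IntervalIntegrable f volume a b)
    (hap : a ≤ p) (hpq : p ≤ q) (hqb : q ≤ b) (hap' : a ≤ p') (hpq' : p' ≤ q') (hqb' : q' ≤ b)
    (hle : ∀ u, (Ioc p q).indicator 1 u + (Ioc p' q').indicator 1 u ≤ f u) :
    (q - p) + (q' - p') ≤ ∫ u in a..b, f u := by
  rw [← integral_indicator_Ioc_one hap hpq hqb, ← integral_indicator_Ioc_one hap' hpq' hqb',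
    ← intervalIntegral.integral_add (intervalIntegrable_indicator_Ioc_one _ _ _ _)
      (intervalIntegrable_indicator_Ioc_one _ _ _ _)]
  exact intervalIntegral.integral_mono_on (hap.trans (hpq.trans hqb))
    ((intervalIntegrable_indicator_Ioc_one _ _ _ _).add
      (intervalIntegrable_indicator_Ioc_one _ _ _ _)) hf fun u _ ↦ hle u

lemma intervalIntegrable_abs_halfCircleCut_sub (L s t a b : ℝ) :
    IntervalIntegrable (fun u ↦ |halfCircleCut L s u - halfCircleCut L t u|) volume a b :=
  ((intervalIntegrable_indicator_Ioc_one _ _ _ _).sub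
    (intervalIntegrable_indicator_Ioc_one _ _ _ _)).abs

lemma circleDist_le_integral_halfCircleCut {L s t : ℝ} (hs : 0 ≤ s) (hst : s ≤ t) (ht : t ≤ L) :
    circleDist L s t ≤ ∫ u in (0 : ℝ)..L / 2, |halfCircleCut L s u - halfCircleCut L t u| := by
  have hf := intervalIntegrable_abs_halfCircleCut_sub L s t 0 (L / 2)
  rw [circleDist, abs_sub_comm, abs_of_nonneg (sub_nonneg.2 hst)]
  rcases le_total (t - s) (L / 2) with hnear | hfar
  · -- the cuts separating `s` and `t` are `u ∈ (s, t] ∪ (s - L/2, t - L/2]`, clipped to `[0, L/2]`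
    calc min (t - s) (L - (t - s)) ≤ t - s := min_le_left _ _
      _ = (min t (L / 2) - min s (L / 2)) + (max (t - L / 2) 0 - max (s - L / 2) 0) := by
        grind
      _ ≤ _ := sub_add_sub_le_integral hf (le_min hs (by linarith)) (min_le_min_right _ hst)
          (min_le_right _ _) (le_max_right _ _) (max_le_max_right _ (by linarith))
          (max_le (by linarith) (by linarith)) fun u ↦ by
            simp only [halfCircleCut, indicator_apply, Set.mem_Ioc, Pi.one_apply]
            split_ifs <;> grind
  · calc min (t - s) (L - (t - s)) ≤ L - (t - s) := min_le_right _ _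
      _ = (s - 0) + (L / 2 - (t - L / 2)) := by ring
      _ ≤ _ := sub_add_sub_le_integral hf le_rfl hs (by linarith) (by linarith) (by linarith)
          le_rfl fun u ↦ by
            simp only [halfCircleCut, indicator_apply, Set.mem_Ioc, Pi.one_apply]
            split_ifs <;> grind

lemma sum_sum_mul_abs_sub_le_half {ι : Type*} (S : Finset ι) (w a : ι → ℝ)
    (hw : ∑ i ∈ S, w i = 1) (ha : ∀ i ∈ S, a i = 0 ∨ a i = 1) :
    ∑ i ∈ S, ∑ j ∈ S, w i * w j * |a i - a j| ≤ 1 / 2 := by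
  set A := ∑ i ∈ S, w i * a i
  have habs : ∀ i ∈ S, ∀ j ∈ S, |a i - a j| = a i + a j - 2 * (a i * a j) := by
    intro i hi j hj
    rcases ha i hi with h | h <;> rcases ha j hj with h' | h' <;> norm_num [h, h']
  calc ∑ i ∈ S, ∑ j ∈ S, w i * w j * |a i - a j|
      = ∑ i ∈ S, ∑ j ∈ S, (w i * a i * w j + w i * (w j * a j) - 2 * (w i * a i) * (w j * a j)) :=
        sum_congr rfl fun i hi ↦ sum_congr rfl fun j hj ↦ by rw [habs i hi j hj]; ring
    _ = 2 * A * (1 - A) := by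
        simp only [sum_sub_distrib, sum_add_distrib, ← mul_sum, ← sum_mul, hw]
        ring
    _ ≤ 1 / 2 := by nlinarith [sq_nonneg (2 * A - 1)]

lemma halfCircleCut_eq_zero_or_one (L s u : ℝ) :
    halfCircleCut L s u = 0 ∨ halfCircleCut L s u = 1 := by
  unfold halfCircleCut indicator
  split_ifs <;> simp

theorem sum_sum_mul_circleDist_le {ι : Type*} (S : Finset ι) (w t : ι → ℝ) {L : ℝ}
    (hw₀ : ∀ i ∈ S, 0 ≤ w i) (hw₁ : ∑ i ∈ S, w i = 1) (hL : 0 ≤ L)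
    (ht : ∀ i ∈ S, t i ∈ Set.Icc 0 L) :
    ∑ i ∈ S, ∑ j ∈ S, w i * w j * circleDist L (t i) (t j) ≤ L / 4 := by
  set cut := fun i u ↦ halfCircleCut L (t i) u
  have hint : ∀ i j,
      IntervalIntegrable (fun u ↦ w i * w j * |cut i u - cut j u|) volume 0 (L / 2) :=
    fun i j ↦ (intervalIntegrable_abs_halfCircleCut_sub L _ _ _ _).const_mul _
  have hrow : ∀ i,
      IntervalIntegrable (fun u ↦ ∑ j ∈ S, w i * w j * |cut i u - cut j u|) volume 0 (L / 2) :=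
    fun i ↦ by simpa only [Finset.sum_fn] using IntervalIntegrable.sum S fun j _ ↦ hint i j
  have hdist : ∀ i ∈ S, ∀ j ∈ S,
      circleDist L (t i) (t j) ≤ ∫ u in (0 : ℝ)..L / 2, |cut i u - cut j u| := by
    intro i hi j hj
    rcases le_total (t i) (t j) with hij | hji
    · exact circleDist_le_integral_halfCircleCut (ht i hi).1 hij (ht j hj).2
    · rw [circleDist, abs_sub_comm, ← circleDist]
      simp_rw [abs_sub_comm (cut i _)]
      exact circleDist_le_integral_halfCircleCut (ht j hj).1 hji (ht i hi).2
  calc ∑ i ∈ S, ∑ j ∈ S, w i * w j * circleDist L (t i) (t j)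
      ≤ ∑ i ∈ S, ∑ j ∈ S, ∫ u in (0 : ℝ)..L / 2, w i * w j * |cut i u - cut j u| := by
        gcongr with i hi j hj
        rw [intervalIntegral.integral_const_mul]
        exact mul_le_mul_of_nonneg_left (hdist i hi j hj) (mul_nonneg (hw₀ i hi) (hw₀ j hj))
    _ = ∫ u in (0 : ℝ)..L / 2, ∑ i ∈ S, ∑ j ∈ S, w i * w j * |cut i u - cut j u| := by
        rw [intervalIntegral.integral_finsetSum fun i _ ↦ hrow i]
        exact sum_congr rfl fun i _ ↦ (intervalIntegral.integral_finsetSum fun j _ ↦ hint i j).symm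
    _ ≤ ∫ u in (0 : ℝ)..L / 2, (1 / 2 : ℝ) := by
        refine intervalIntegral.integral_mono_on (by positivity) ?_ intervalIntegrable_const
          fun u _ ↦ sum_sum_mul_abs_sub_le_half S w _ hw₁ fun i _ ↦ halfCircleCut_eq_zero_or_one ..
        simpa only [Finset.sum_fn] using IntervalIntegrable.sum S fun i _ ↦ hrow i
    _ = L / 4 := by simp; ring

end CircleCuts

section Polygon

variable {E : Type*} [AddCommGroup E] [Module ℝ E]

lemma exists_weights_of_mem_convexHull_image {ι : Type*} (S : Finset ι) (f : ι → E) {y : E}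
    (hy : y ∈ convexHull ℝ (f '' S)) :
    ∃ w : ι → ℝ, (∀ i ∈ S, 0 ≤ w i) ∧ ∑ i ∈ S, w i = 1 ∧ ∑ i ∈ S, w i • f i = y := by
  classical
  let T : Set E := {z | ∃ w : ι → ℝ, (∀ i ∈ S, 0 ≤ w i) ∧ ∑ i ∈ S, w i = 1 ∧ ∑ i ∈ S, w i • f i = z}
  refine convexHull_min (t := T) ?_ ?_ hy
  · rintro _ ⟨i, hi : i ∈ S, rfl⟩
    exact ⟨Pi.single i 1, fun j _ ↦ (Pi.single_nonneg.2 zero_le_one : (0 : ι → ℝ) ≤ _) j,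
      by simp [hi], by simp [Pi.single_apply, hi]⟩
  · rintro _ ⟨w, hw₀, hw₁, rfl⟩ _ ⟨w', hw₀', hw₁', rfl⟩ a b ha hb hab
    refine ⟨a • w + b • w', fun i hi ↦ ?_, ?_, ?_⟩
    · simpa using add_nonneg (mul_nonneg ha (hw₀ i hi)) (mul_nonneg hb (hw₀' i hi))
    · simp [sum_add_distrib, ← mul_sum, hw₁, hw₁', hab]
    · simp [add_smul, mul_smul, sum_add_distrib, smul_sum]

lemma Seminorm.sum_mul_le_sum_sum_mul_sub (p : Seminorm ℝ E) {ι : Type*} (S : Finset ι)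
    (w : ι → ℝ) (x : ι → E) (hw₀ : ∀ i ∈ S, 0 ≤ w i) (hw₁ : ∑ i ∈ S, w i = 1)
    (hx : ∑ i ∈ S, w i • x i = 0) :
    ∑ i ∈ S, w i * p (x i) ≤ ∑ i ∈ S, ∑ j ∈ S, w i * w j * p (x i - x j) := by
  have hxi : ∀ i, x i = ∑ j ∈ S, w j • (x i - x j) := fun i ↦ by
    simp [smul_sub, sum_sub_distrib, ← sum_smul, hw₁, hx]
  have hle : ∀ i, p (x i) ≤ ∑ j ∈ S, w j * p (x i - x j) := fun i ↦ by
    calc p (x i) = p (∑ j ∈ S, w j • (x i - x j)) := by rw [← hxi]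
      _ ≤ ∑ j ∈ S, p (w j • (x i - x j)) :=
        le_sum_of_subadditive p (map_zero p).le (map_add_le_add p) S _
      _ = ∑ j ∈ S, w j * p (x i - x j) := sum_congr rfl fun j hj ↦ by
        rw [map_smul_eq_mul, Real.norm_of_nonneg (hw₀ j hj)]
  calc ∑ i ∈ S, w i * p (x i) ≤ ∑ i ∈ S, w i * ∑ j ∈ S, w j * p (x i - x j) :=
        sum_le_sum fun i hi ↦ mul_le_mul_of_nonneg_left (hle i) (hw₀ i hi)
    _ = ∑ i ∈ S, ∑ j ∈ S, w i * w j * p (x i - x j) := by simp only [mul_sum, mul_assoc]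

lemma Seminorm.sub_le_sum_Ico (p : Seminorm ℝ E) (f : ℕ → E) {i j : ℕ} (hij : i ≤ j) :
    p (f j - f i) ≤ ∑ k ∈ Ico i j, p (f (k + 1) - f k) := by
  induction j, hij using Nat.le_induction with
  | base => simp
  | succ j hij ih =>
    calc p (f (j + 1) - f i) ≤ p (f (j + 1) - f j) + p (f j - f i) := by
          simpa using map_add_le_add p (f (j + 1) - f j) (f j - f i)
      _ ≤ _ := by rw [sum_Ico_succ_top hij, add_comm]; gcongr

noncomputable def polygonArclength (p : Seminorm ℝ E) (m : ℕ) (x : ℕ → E) (i : ℕ) : ℝ :=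
  ∑ k ∈ range i, p (x ((k + 1) % m) - x k)

variable (p : Seminorm ℝ E) {m : ℕ} (x : ℕ → E)

lemma polygonArclength_mono : Monotone (polygonArclength p m x) := fun _ _ hij ↦
  sum_le_sum_of_subset_of_nonneg (range_subset_range.2 hij) fun _ _ _ ↦ apply_nonneg _ _

lemma sub_mod_le_polygonArclength_sub {i j : ℕ} (hij : i ≤ j) (hjm : j ≤ m) :
    p (x (j % m) - x (i % m)) ≤ polygonArclength p m x j - polygonArclength p m x i := by
  rw [polygonArclength, polygonArclength, ← sum_Ico_eq_sub _ hij]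
  refine (p.sub_le_sum_Ico (fun k ↦ x (k % m)) hij).trans_eq (sum_congr rfl fun k hk ↦ ?_)
  rw [Nat.mod_eq_of_lt ((mem_Ico.1 hk).2.trans_le hjm)]

lemma sub_le_circleDist_polygonArclength_of_le {i j : ℕ} (hij : i ≤ j) (hjm : j < m) :
    p (x i - x j) ≤ circleDist (polygonArclength p m x m) (polygonArclength p m x i)
      (polygonArclength p m x j) := by
  set A := polygonArclength p m x
  have him : i < m := hij.trans_lt hjm
  have hA0 : A 0 = 0 := sum_range_zero _
  rw [circleDist, abs_sub_comm, abs_of_nonneg (sub_nonneg.2 (polygonArclength_mono p x hij))]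
  refine le_min ?_ ?_
  · simpa [map_sub_rev p, Nat.mod_eq_of_lt hjm, Nat.mod_eq_of_lt him]
      using sub_mod_le_polygonArclength_sub p x hij hjm.le
  · have h₁ := sub_mod_le_polygonArclength_sub p x (Nat.zero_le i) him.le
    have h₂ := sub_mod_le_polygonArclength_sub p x hjm.le le_rfl
    simp only [Nat.mod_self, Nat.zero_mod, Nat.mod_eq_of_lt hjm, Nat.mod_eq_of_lt him] at h₁ h₂
    calc p (x i - x j) ≤ p (x i - x 0) + p (x 0 - x j) := by
          simpa using map_add_le_add p (x i - x 0) (x 0 - x j)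
      _ ≤ A m - (A j - A i) := by linarith

lemma sub_le_circleDist_polygonArclength {i j : ℕ} (him : i < m) (hjm : j < m) :
    p (x i - x j) ≤ circleDist (polygonArclength p m x m) (polygonArclength p m x i)
      (polygonArclength p m x j) := by
  rcases le_total i j with hij | hji
  · exact sub_le_circleDist_polygonArclength_of_le p x hij hjm
  · rw [map_sub_rev, circleDist, abs_sub_comm, ← circleDist]
    exact sub_le_circleDist_polygonArclength_of_le p x hji him

theorem four_le_polygonArclength (hx : ∀ i < m, 1 ≤ p (x i))
    (h0 : (0 : E) ∈ convexHull ℝ (x '' Set.Iio m)) : 4 ≤ polygonArclength p m x m := by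
  set A := polygonArclength p m x
  rw [← coe_range] at h0
  obtain ⟨w, hw₀, hw₁, hwx⟩ := exists_weights_of_mem_convexHull_image (range m) x h0
  have hA₀ : ∀ i, 0 ≤ A i := fun i ↦ sum_nonneg fun _ _ ↦ apply_nonneg _ _
  have hA : ∀ i ∈ range m, A i ∈ Set.Icc 0 (A m) := fun i hi ↦
    ⟨hA₀ i, polygonArclength_mono p x (mem_range.1 hi).le⟩
  have : 1 ≤ A m / 4 := calc
    1 = ∑ i ∈ range m, w i := hw₁.symm
    _ ≤ ∑ i ∈ range m, w i * p (x i) := sum_le_sum fun i hi ↦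
        le_mul_of_one_le_right (hw₀ i hi) (hx i (mem_range.1 hi))
    _ ≤ ∑ i ∈ range m, ∑ j ∈ range m, w i * w j * p (x i - x j) :=
        p.sum_mul_le_sum_sum_mul_sub _ w x hw₀ hw₁ hwx
    _ ≤ ∑ i ∈ range m, ∑ j ∈ range m, w i * w j * circleDist (A m) (A i) (A j) := by
        gcongr with i hi j hj
        · exact mul_nonneg (hw₀ i hi) (hw₀ j hj)
        · exact sub_le_circleDist_polygonArclength p x (mem_range.1 hi) (mem_range.1 hj)
    _ ≤ A m / 4 := sum_sum_mul_circleDist_le _ w A hw₀ hw₁ (hA₀ m) hA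
  linarith

end Polygon

theorem stmt3_general {n m : ℕ} (K : Set (EuclideanSpace ℝ (Fin n)))
    (hKconv : Convex ℝ K) (hK0 : (0 : EuclideanSpace ℝ (Fin n)) ∈ interior K)
    (hKsymm : K = -K)
    (x : ℕ → EuclideanSpace ℝ (Fin n))
    (hout : ∀ i < m, 1 ≤ gauge K (x i))
    (h0 : (0 : EuclideanSpace ℝ (Fin n)) ∈ convexHull ℝ (x '' Set.Iio m)) :
    4 ≤ KLength K m x := by
  have hbal : Balanced ℝ K :=
    (balanced_iff_neg_mem hKconv).2 fun y hy ↦ by rw [hKsymm]; exact Set.neg_mem_neg.2 hy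
  have habs : Absorbent ℝ K := absorbent_nhds_zero (mem_interior_iff_mem_nhds.1 hK0)
  exact four_le_polygonArclength (gaugeSeminorm hbal hKconv habs) x hout h0

/-- If the vertices `x 0, …, x (m-1)` (`m ≥ 2`, consecutive vertices distinct) all lie
outside the interior of the centrally symmetric convex body `K` and `0` lies in their
convex hull, then the `K`-length of the closed polygon through them is at least `4`. -/
theorem stmt3 {n m : ℕ} (K : Set (EuclideanSpace ℝ (Fin n)))
    (hKconv : Convex ℝ K) (hKcpt : IsCompact K) (hK0 : (0 : EuclideanSpace ℝ (Fin n)) ∈ interior K)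
    (hKsymm : K = -K) (hm : 2 ≤ m)
    (x : ℕ → EuclideanSpace ℝ (Fin n))
    (hout : ∀ i < m, 1 ≤ gauge K (x i))
    (hdist : ∀ i < m, x ((i + 1) % m) ≠ x i)
    (h0 : (0 : EuclideanSpace ℝ (Fin n)) ∈ convexHull ℝ (x '' Set.Iio m)) :
    4 ≤ KLength K m x :=
  stmt3_general K hKconv hK0 hKsymm x hout h0
end

section
/- Let S be a non-degenerate simplex in ℝᵏ with vertices x₁,…,x_{k+1}, and let q₁,…,q_{k+1} ∈ ℝᵏ be points with q_i ∈ conv{x_j : j ≠ i} for each i. If 0 ∈ conv{x₁,…,x_{k+1}}, then there exists a nonempty subset I ⊆ {1,…,k+1} such that 0 lies in the convex hull of {q_i : i ∈ I} ∪ {x_j : j ∉ I}. -/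
/-!
Write `0 = ∑ⱼ bⱼ • x j` and `q i = ∑ⱼ μᵢⱼ • x j` in barycentric coordinates. It suffices to
find `a ≥ 0` with `a ᵥ* μ ≤ b`, with equality wherever `aᵢ > 0` and at one index at least: then
`I` is the set of tight indices, and the weights `aᵢ` on `q i` together with the slacks
`bⱼ - (a ᵥ* μ)ⱼ` on `x j` exhibit `0` as a convex combination of `q '' I ∪ x '' Iᶜ`.

This linear complementarity problem is solved by Lemke's parity argument. Take the columns
`μ i`, `e j` and an artificial column `1`, and call a set of columns complementary if it never
contains both `μ i` and `e i`. For nondegenerate `b`, every feasible complementary set of `n + 1`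
columns has exactly two feasible facets, while a feasible complementary basis has an odd number of
complementary one-column extensions exactly when it avoids `1`. Double counting shows that the
bases avoiding `1` are even in number; the unit basis is one of them, and any other one is a
solution. A general `b ≥ 0` is a limit of nondegenerate positive ones, and the solutions stay
bounded because `∑ a = ∑ a ᵥ* μ ≤ ∑ b`.
-/

open Finset Module Matrix

namespace Lemke

section Feasible

variable {ι V : Type*} [Fintype ι] [AddCommGroup V] [Module ℝ V]

def Feasible (v : ι → V) (b : V) (S : Finset ι) : Prop :=
  ∃ x : ι → ℝ, (∀ c, 0 ≤ x c) ∧ (∀ c ∉ S, x c = 0) ∧ ∑ c, x c • v c = b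

def Nondegenerate (v : ι → V) (b : V) : Prop :=
  ∀ T : Finset ι, #T < finrank ℝ V → b ∉ Submodule.span ℝ (v '' T)

variable {v : ι → V} {b : V} {S T : Finset ι}

theorem Feasible.mono (h : Feasible v b S) (hST : S ⊆ T) : Feasible v b T :=
  let ⟨x, hx0, hxS, hx⟩ := h
  ⟨x, hx0, fun c hc => hxS c fun hcS => hc (hST hcS), hx⟩

theorem sum_smul_mem_span {x : ι → ℝ} (hx : ∀ c ∉ S, x c = 0) :
    ∑ c, x c • v c ∈ Submodule.span ℝ (v '' S) := by
  rw [← sum_subset (subset_univ S) fun c _ hc => by rw [hx c hc, zero_smul]]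
  exact Submodule.sum_mem _ fun c hc =>
    Submodule.smul_mem _ _ (Submodule.subset_span ⟨c, hc, rfl⟩)

theorem Nondegenerate.le_card (hb : Nondegenerate v b) (h : Feasible v b S) :
    finrank ℝ V ≤ #S := by
  obtain ⟨x, -, hxS, hx⟩ := h
  by_contra hlt
  exact hb S (not_le.1 hlt) (hx ▸ sum_smul_mem_span hxS)

theorem feasible_erase_of_eq_zero [DecidableEq ι] {x : ι → ℝ} (hx0 : ∀ c, 0 ≤ x c)
    (hxS : ∀ c ∉ S, x c = 0) (hx : ∑ c, x c • v c = b) {e : ι} (he : x e = 0) :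
    Feasible v b (S.erase e) :=
  ⟨x, hx0, fun c hc => by
    by_cases hce : c = e
    · rwa [hce]
    · exact hxS c fun hcS => hc (mem_erase.2 ⟨hce, hcS⟩), hx⟩

theorem Nondegenerate.pos_of_mem [DecidableEq ι] (hb : Nondegenerate v b)
    (hS : #S = finrank ℝ V) {x : ι → ℝ} (hx0 : ∀ c, 0 ≤ x c) (hxS : ∀ c ∉ S, x c = 0)
    (hx : ∑ c, x c • v c = b) {c : ι} (hc : c ∈ S) : 0 < x c := by
  refine (hx0 c).lt_of_ne fun hxc => ?_
  have := hb.le_card (feasible_erase_of_eq_zero hx0 hxS hx hxc.symm)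
  rw [card_erase_of_mem hc] at this
  have := card_pos.2 ⟨c, hc⟩
  omega

variable (v) in
theorem exists_dependency [DecidableEq ι] [FiniteDimensional ℝ V] (hS : finrank ℝ V < #S) :
    ∃ d : ι → ℝ, d ≠ 0 ∧ (∀ c ∉ S, d c = 0) ∧ ∑ c, d c • v c = 0 := by
  have hdep : ¬ LinearIndepOn ℝ v (S : Set ι) := fun hli => by
    have := hli.fintype_card_le_finrank
    simp only [coe_sort_coe, Fintype.card_coe] at this
    omega
  obtain ⟨f, hf, c, hcS, hfc⟩ := not_linearIndepOn_finset_iff.1 hdep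
  refine ⟨fun c => if c ∈ S then f c else 0, fun h => hfc ?_, fun c hc => if_neg hc, ?_⟩
  · simpa [hcS] using congrFun h c
  · simpa [ite_smul, sum_ite_mem] using hf

/-- The ratio test of the simplex method. -/
theorem exists_feasible_erase [DecidableEq ι] {x : ι → ℝ} (hx0 : ∀ c, 0 ≤ x c)
    (hxS : ∀ c ∉ S, x c = 0) (hx : ∑ c, x c • v c = b) {d : ι → ℝ} (hdS : ∀ c ∉ S, d c = 0)
    (hd : ∑ c, d c • v c = 0) (hneg : ∃ c, d c < 0) :
    ∃ e ∈ S, d e < 0 ∧ Feasible v b (S.erase e) := by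
  obtain ⟨e, he, hmin⟩ := exists_min_image {c | d c < 0} (fun c => x c / -d c)
    (by simpa [Finset.Nonempty] using hneg)
  have hde : d e < 0 := by simpa using he
  have heS : e ∈ S := by_contra fun h => by simp [hdS e h] at hde
  set t := x e / -d e
  have ht : 0 ≤ t := div_nonneg (hx0 e) (by linarith)
  refine ⟨e, heS, hde, feasible_erase_of_eq_zero (x := x + t • d) (fun c => ?_)
    (fun c hc => ?_) ?_ ?_⟩
  · have hxc : 0 ≤ x c := hx0 c
    simp only [Pi.add_apply, Pi.smul_apply, smul_eq_mul]
    rcases lt_or_ge (d c) 0 with hdc | hdc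
    · have := (le_div_iff₀ (neg_pos.2 hdc)).1 (hmin c (by simpa using hdc))
      linarith
    · nlinarith
  · simp [hxS c hc, hdS c hc]
  · simp only [Pi.add_apply, Pi.smul_apply, add_smul, smul_eq_mul, mul_smul, sum_add_distrib,
      ← smul_sum, hd, hx, smul_zero, add_zero]
  · simp only [Pi.add_apply, Pi.smul_apply, smul_eq_mul, t]
    field_simp [hde.ne]
    ring

theorem exists_neg_of_dependency (f : V →ₗ[ℝ] ℝ) (hf : ∀ c, 0 < f (v c)) {d : ι → ℝ}
    (hd0 : d ≠ 0) (hd : ∑ c, d c • v c = 0) : ∃ c, d c < 0 := by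
  by_contra! hnonneg
  have hsum : ∑ c, d c * f (v c) = 0 := by simpa using congrArg f hd
  refine hd0 (funext fun c => ?_)
  have := (sum_eq_zero_iff_of_nonneg fun c _ => mul_nonneg (hnonneg c) (hf c).le).1 hsum c
    (mem_univ c)
  exact (mul_eq_zero.1 this).resolve_right (hf c).ne'

/-- Otherwise the ratio test along `d` or `-d` would leave a feasible set of `finrank - 1`
columns. -/
theorem Nondegenerate.dependency_eq_zero [DecidableEq ι] (hb : Nondegenerate v b)
    {C : Finset ι} (hC : #C = finrank ℝ V + 1) {e : ι} (heC : e ∈ C)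
    (he : Feasible v b (C.erase e)) {d : ι → ℝ} (hdC : ∀ c ∉ C, d c = 0) (hde : d e = 0)
    (hd : ∑ c, d c • v c = 0) : d = 0 := by
  obtain ⟨x, hx0, hxS, hx⟩ := he
  have hdS : ∀ c ∉ C.erase e, d c = 0 := fun c hc => by
    by_cases hce : c = e
    · rwa [hce]
    · exact hdC c fun hcC => hc (mem_erase.2 ⟨hce, hcC⟩)
  have nonneg : ∀ d' : ι → ℝ, (∀ c ∉ C.erase e, d' c = 0) → ∑ c, d' c • v c = 0 →
      ∀ c, 0 ≤ d' c := fun d' hd'S hd' => by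
    by_contra! hneg
    obtain ⟨c, hc, -, hfeas⟩ := exists_feasible_erase hx0 hxS hx hd'S hd' hneg
    have := hb.le_card hfeas
    have := card_pos.2 ⟨c, hc⟩
    rw [card_erase_of_mem hc, card_erase_of_mem heC, hC] at *
    omega
  refine funext fun c => le_antisymm ?_ (nonneg d hdS hd c)
  simpa using nonneg (-d) (fun c hc => by simp [hdS c hc]) (by simpa using hd) c

open scoped Classical in
/-- Given three feasible facets `C.erase eᵢ` with solutions `xᵢ`, the dependency
`x₂ e₁ • (x₁ - x₃) - x₃ e₁ • (x₁ - x₂)` vanishes at `e₁`, hence everywhere, and its values at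
`e₂` and `e₃` then force both `x₃ e₁ < x₂ e₁` and `x₂ e₁ < x₃ e₁`. -/
theorem Nondegenerate.card_filter_feasible_erase_le_two [DecidableEq ι]
    (hb : Nondegenerate v b) {C : Finset ι} (hC : #C = finrank ℝ V + 1) :
    #{c ∈ C | Feasible v b (C.erase c)} ≤ 2 := by
  refine not_lt.1 fun h => ?_
  obtain ⟨e₁, h₁, e₂, h₂, e₃, h₃, h₁₂, h₁₃, h₂₃⟩ := two_lt_card.1 h
  simp only [mem_filter] at h₁ h₂ h₃
  obtain ⟨x₁, hx₁0, hx₁S, hx₁⟩ := h₁.2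
  obtain ⟨x₂, hx₂0, hx₂S, hx₂⟩ := h₂.2
  obtain ⟨x₃, hx₃0, hx₃S, hx₃⟩ := h₃.2
  have pos : ∀ {e c : ι} {x : ι → ℝ}, e ∈ C → (∀ c, 0 ≤ x c) → (∀ c ∉ C.erase e, x c = 0) →
      ∑ c, x c • v c = b → c ∈ C → c ≠ e → 0 < x c := fun he hx0 hxS hx hc hce =>
    hb.pos_of_mem (by rw [card_erase_of_mem he, hC]; rfl) hx0 hxS hx (mem_erase.2 ⟨hce, hc⟩)
  have zero : ∀ {e : ι} {x : ι → ℝ}, (∀ c ∉ C.erase e, x c = 0) → x e = 0 := fun hxS =>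
    hxS _ (notMem_erase _ _)
  have off : ∀ {e : ι} {x : ι → ℝ}, (∀ c ∉ C.erase e, x c = 0) → ∀ c ∉ C, x c = 0 :=
    fun hxS c hc => hxS c fun h => hc (mem_of_mem_erase h)
  set d := x₂ e₁ • (x₁ - x₃) - x₃ e₁ • (x₁ - x₂)
  have hd : d = 0 := by
    refine hb.dependency_eq_zero hC h₁.1 h₁.2 (fun c hc => ?_) ?_ ?_
    · simp [d, off hx₁S c hc, off hx₂S c hc, off hx₃S c hc]
    · simp [d, zero hx₁S]; ring
    · simp [d, sub_smul, smul_sub, sum_sub_distrib, mul_smul, ← smul_sum, hx₁, hx₂, hx₃]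
  have at₂ := congrFun hd e₂
  have at₃ := congrFun hd e₃
  simp [d, zero hx₂S, zero hx₃S] at at₂ at₃
  have h₂₁ := pos h₂.1 hx₂0 hx₂S hx₂ h₁.1 h₁₂
  have h₃₁ := pos h₃.1 hx₃0 hx₃S hx₃ h₁.1 h₁₃
  have h₁₂' := pos h₁.1 hx₁0 hx₁S hx₁ h₂.1 h₁₂.symm
  have h₃₂ := pos h₃.1 hx₃0 hx₃S hx₃ h₂.1 h₂₃
  have h₁₃' := pos h₁.1 hx₁0 hx₁S hx₁ h₃.1 h₁₃.symm
  have h₂₃' := pos h₂.1 hx₂0 hx₂S hx₂ h₃.1 h₂₃.symm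
  rcases le_or_gt (x₃ e₁) (x₂ e₁) with hle | hlt
  · nlinarith [mul_nonneg (sub_nonneg.2 hle) h₁₃'.le, mul_pos h₃₁ h₂₃']
  · nlinarith [mul_pos (sub_pos.2 hlt) h₁₂', mul_pos h₂₁ h₃₂]

open scoped Classical in
/-- The two ends of the ratio test along a dependency, which has coordinates of both signs. -/
theorem two_le_card_filter_feasible_erase [DecidableEq ι] [FiniteDimensional ℝ V]
    (f : V →ₗ[ℝ] ℝ) (hf : ∀ c, 0 < f (v c)) {C : Finset ι} (hC : finrank ℝ V < #C)
    (hCb : Feasible v b C) : 2 ≤ #{c ∈ C | Feasible v b (C.erase c)} := by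
  obtain ⟨x, hx0, hxC, hx⟩ := hCb
  obtain ⟨d, hd0, hdC, hd⟩ := exists_dependency v hC
  obtain ⟨e₁, he₁, hd₁, hfeas₁⟩ :=
    exists_feasible_erase hx0 hxC hx hdC hd (exists_neg_of_dependency f hf hd0 hd)
  obtain ⟨e₂, he₂, hd₂, hfeas₂⟩ := exists_feasible_erase hx0 hxC hx
    (d := -d) (fun c hc => by simp [hdC c hc]) (by simpa using hd)
    (exists_neg_of_dependency f hf (neg_ne_zero.2 hd0) (by simpa using hd))
  refine one_lt_card.2 ⟨e₁, mem_filter.2 ⟨he₁, hfeas₁⟩, e₂, mem_filter.2 ⟨he₂, hfeas₂⟩, ?_⟩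
  rintro rfl
  simp only [Pi.neg_apply, neg_neg_iff_pos] at hd₂
  linarith

end Feasible

theorem dense_setOf_nondegenerate {ι V : Type*} [Fintype ι] [NormedAddCommGroup V]
    [NormedSpace ℝ V] [FiniteDimensional ℝ V] (v : ι → V) :
    Dense {b | Nondegenerate v b} := by
  borelize V
  have hnull : MeasureTheory.Measure.addHaar {b : V | ¬ Nondegenerate v b} = 0 := by
    have hbad : {b : V | ¬ Nondegenerate v b} =
        ⋃ T ∈ {T : Finset ι | #T < finrank ℝ V}, (Submodule.span ℝ (v '' T) : Set V) := by
      ext b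
      simp [Nondegenerate]
    rw [hbad, MeasureTheory.measure_biUnion_null_iff (Set.to_countable _)]
    intro T hT
    classical
    refine MeasureTheory.Measure.addHaar_submodule _ _ fun htop => ?_
    have := finrank_span_finset_le_card (R := ℝ) (T.image v)
    rw [coe_image, Set.finrank, htop, finrank_top] at this
    exact absurd (this.trans card_image_le) (not_le.2 hT)
  simpa only [Set.compl_ofPred, not_not] using interior_eq_empty_iff_dense_compl.1
    (MeasureTheory.Measure.interior_eq_empty_of_null hnull)

section Complementarity

variable {n : ℕ}

def IsComplementarySolution (μ : Matrix (Fin n) (Fin n) ℝ) (b a : Fin n → ℝ) : Prop :=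
  0 ≤ a ∧ a ᵥ* μ ≤ b ∧ (∀ i, a i * (b i - (a ᵥ* μ) i) = 0) ∧ ∃ j, (a ᵥ* μ) j = b j

theorem sum_vecMul_of_sum_row_eq_one {μ : Matrix (Fin n) (Fin n) ℝ}
    (hrow : ∀ i, ∑ j, μ i j = 1) (a : Fin n → ℝ) : ∑ j, (a ᵥ* μ) j = ∑ i, a i := by
  simp only [vecMul, dotProduct]
  rw [sum_comm]
  simp [← mul_sum, hrow]

theorem IsComplementarySolution.mem_convexHull {E : Type*} [AddCommGroup E] [Module ℝ E]
    {μ : Matrix (Fin n) (Fin n) ℝ} {b a : Fin n → ℝ} (ha : IsComplementarySolution μ b a)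
    (hrow : ∀ i, ∑ j, μ i j = 1) (hb : ∑ j, b j = 1) {x q : Fin n → E}
    (hq : ∀ i, ∑ j, μ i j • x j = q i) :
    ∑ j, b j • x j ∈ convexHull ℝ (q '' ↑({i | (a ᵥ* μ) i = b i} : Finset _) ∪
      x '' ↑({i | (a ᵥ* μ) i = b i} : Finset _)ᶜ) := by
  obtain ⟨ha0, hle, hcompl, -⟩ := ha
  set w : Fin n ⊕ Fin n → ℝ := Sum.elim a (b - a ᵥ* μ)
  have hw1 : ∑ᶠ c, w c = 1 := by
    rw [finsum_eq_sum_of_fintype, Fintype.sum_sum_type]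
    simp [w, sum_sub_distrib, sum_vecMul_of_sum_row_eq_one hrow, hb]
  have hwz : ∑ᶠ c, w c • Sum.elim q x c = ∑ j, b j • x j := by
    rw [finsum_eq_sum_of_fintype, Fintype.sum_sum_type]
    simp only [w, Sum.elim_inl, Sum.elim_inr, ← hq, smul_sum, smul_smul]
    rw [sum_comm, ← sum_add_distrib]
    refine sum_congr rfl fun j _ => ?_
    simp [vecMul, dotProduct, ← sum_smul, ← add_smul]
  rw [← hwz]
  refine (convex_convexHull ℝ _).finsum_mem (fun c => ?_) hw1 fun c hc =>
    subset_convexHull ℝ _ ?_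
  · rcases c with i | j
    exacts [ha0 i, sub_nonneg.2 (hle j)]
  · rcases c with i | j
    · refine Or.inl ⟨i, ?_, rfl⟩
      simpa [sub_eq_zero, eq_comm] using (mul_eq_zero.1 (hcompl i)).resolve_left hc
    · refine Or.inr ⟨j, ?_, rfl⟩
      simpa [w, sub_eq_zero, eq_comm] using hc

variable (μ : Matrix (Fin n) (Fin n) ℝ)

theorem isClosed_setOf_isComplementarySolution :
    IsClosed {p : (Fin n → ℝ) × (Fin n → ℝ) | IsComplementarySolution μ p.1 p.2} := by
  simp only [IsComplementarySolution, Set.ofPred_and, Set.ofPred_forall, Set.ofPred_exists]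
  refine (isClosed_le continuous_const continuous_snd).inter <|
    (isClosed_le (by fun_prop) continuous_fst).inter <|
    (isClosed_iInter fun i => isClosed_eq (by fun_prop) continuous_const).inter <|
    isClosed_iUnion_of_finite fun j => isClosed_eq (by fun_prop) (by fun_prop)

theorem isClosed_setOf_exists_isComplementarySolution (hrow : ∀ i, ∑ j, μ i j = 1) :
    IsClosed {b | ∃ a, IsComplementarySolution μ b a} := by
  refine isSeqClosed_iff_isClosed.1 fun u b hu hub => ?_
  choose a ha using hu
  obtain ⟨M, hM⟩ := (tendsto_finsetSum univ fun j _ =>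
    ((continuous_apply j).tendsto b).comp hub).bddAbove_range
  have hsum : ∀ k, ∑ i, a k i ≤ M := fun k => calc
    ∑ i, a k i = ∑ j, (a k ᵥ* μ) j := (sum_vecMul_of_sum_row_eq_one hrow _).symm
    _ ≤ ∑ j, u k j := sum_le_sum fun j _ => (ha k).2.1 j
    _ ≤ M := hM ⟨k, rfl⟩
  have hM0 : 0 ≤ M := (sum_nonneg fun i _ => (ha 0).1 i).trans (hsum 0)
  obtain ⟨a', -, φ, hφ, ha'⟩ := tendsto_subseq_of_bounded
    (Metric.isBounded_closedBall (x := (0 : Fin n → ℝ)) (r := M)) (x := a) fun k => by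
      rw [mem_closedBall_zero_iff, pi_norm_le_iff_of_nonneg hM0]
      intro i
      rw [Real.norm_of_nonneg ((ha k).1 i)]
      exact (single_le_sum (fun i _ => (ha k).1 i) (mem_univ i)).trans (hsum k)
  exact ⟨a', (isClosed_setOf_isComplementarySolution μ).mem_of_tendsto
    ((hub.comp hφ.tendsto_atTop).prodMk_nhds ha') (.of_forall fun k => ha (φ k))⟩

end Complementarity

section Tableau

variable {n : ℕ}

abbrev ColumnIndex (n : ℕ) := Option (Fin n ⊕ Fin n)

/-- The columns of Lemke's tableau: `some (inl i)` is the row `μ i`, `some (inr j)` the unit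
vector `Pi.single j 1`, and `none` the artificial all-ones column. -/
def column (μ : Matrix (Fin n) (Fin n) ℝ) : ColumnIndex n → Fin n → ℝ
  | none => 1
  | some (.inl i) => μ i
  | some (.inr j) => Pi.single j 1

def IsComplementary (S : Finset (ColumnIndex n)) : Prop :=
  ∀ c, some c ∈ S → some c.swap ∉ S

theorem IsComplementary.mono {S T : Finset (ColumnIndex n)} (hT : IsComplementary T)
    (h : S ⊆ T) : IsComplementary S :=
  fun c hc hc' => hT c (h hc) (h hc')

theorem isComplementary_insert_none {S : Finset (ColumnIndex n)} :
    IsComplementary (insert none S) ↔ IsComplementary S := by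
  simp [IsComplementary]

theorem IsComplementary.insert_some_iff {S : Finset (ColumnIndex n)} (hS : IsComplementary S)
    {c : Fin n ⊕ Fin n} (hc : some c ∉ S) :
    IsComplementary (insert (some c) S) ↔ some c.swap ∉ S := by
  refine ⟨fun h => h c (mem_insert_self _ _) ∘ mem_insert_of_mem, fun h c' hc' => ?_⟩
  simp only [mem_insert, Option.some.injEq, not_or]
  rcases mem_insert.1 hc' with hc' | hc'
  · cases Option.some.inj hc'
    exact ⟨by cases c <;> simp, h⟩
  · refine ⟨fun hcc => h ?_, hS c' hc'⟩
    rwa [← hcc, Sum.swap_swap]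

theorem sum_smul_column (μ : Matrix (Fin n) (Fin n) ℝ) (x : ColumnIndex n → ℝ) :
    ∑ c, x c • column μ c =
      x none • 1 + (fun i => x (some (.inl i))) ᵥ* μ + fun j => x (some (.inr j)) := by
  simp [Fintype.sum_option, Fintype.sum_sum_type, column, vecMul_eq_sum, add_assoc,
    ← pi_eq_sum_univ']

theorem sum_column_pos {μ : Matrix (Fin n) (Fin n) ℝ} (hn : 0 < n)
    (hrow : ∀ i, ∑ j, μ i j = 1) (c : ColumnIndex n) :
    0 < (∑ j : Fin n, LinearMap.proj (R := ℝ) j) (column μ c) := by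
  rcases c with _ | i | j <;> simp [column, hrow, hn]

open scoped Classical in
noncomputable def extensions (B : Finset (ColumnIndex n)) : Finset (ColumnIndex n) :=
  {c | c ∉ B ∧ IsComplementary (insert c B)}

theorem IsComplementary.some_mem_extensions_iff {B : Finset (ColumnIndex n)}
    (hB : IsComplementary B) {c : Fin n ⊕ Fin n} :
    some c ∈ extensions B ↔ some c ∉ B ∧ some c.swap ∉ B := by
  simp only [extensions, mem_filter, mem_univ, true_and]
  exact and_congr_right hB.insert_some_iff

/-- The artificial column extends a complementary set not containing it, and the other
extensions come in complementary pairs. -/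
theorem IsComplementary.odd_card_extensions_iff {B : Finset (ColumnIndex n)}
    (hB : IsComplementary B) : Odd #(extensions B) ↔ none ∉ B := by
  have hnone : none ∈ extensions B ↔ none ∉ B := by
    simp [extensions, isComplementary_insert_none, hB]
  have hpair : ∀ i, some (.inr i) ∈ extensions B ↔ some (.inl i) ∈ extensions B := fun i => by
    simp only [hB.some_mem_extensions_iff, Sum.swap_inl, Sum.swap_inr, and_comm]
  rw [← show ∑ c, (if c ∈ extensions B then 1 else 0) = #(extensions B) by simp,
    Fintype.sum_option, Fintype.sum_sum_type,
    Fintype.sum_congr _ _ fun i => if_congr (hpair i) rfl rfl, ← two_mul, Nat.odd_add]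
  by_cases h : none ∈ B <;> simp [hnone, h]

def unitBasis (n : ℕ) : Finset (ColumnIndex n) :=
  univ.image fun j => some (.inr j)

theorem card_unitBasis : #(unitBasis n) = n := by
  rw [unitBasis, card_image_of_injective _ fun i j h => by simpa using h, card_univ,
    Fintype.card_fin]

variable (μ : Matrix (Fin n) (Fin n) ℝ) (b : Fin n → ℝ)

def IsVertex (B : Finset (ColumnIndex n)) : Prop :=
  #B = n ∧ IsComplementary B ∧ Feasible (column μ) b B

def IsEdge (C : Finset (ColumnIndex n)) : Prop :=
  #C = n + 1 ∧ IsComplementary C ∧ Feasible (column μ) b C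

open scoped Classical in
theorem sum_card_extensions :
    ∑ B with IsVertex μ b B, #(extensions B) =
      ∑ C with IsEdge μ b C, #{c ∈ C | IsVertex μ b (C.erase c)} := by
  rw [← card_sigma, ← card_sigma]
  refine card_nbij' (fun p => ⟨insert p.2 p.1, p.2⟩) (fun p => ⟨p.1.erase p.2, p.2⟩)
    ?_ ?_ ?_ ?_
  · rintro ⟨B, c⟩ h
    simp only [coe_sigma, Set.mem_sigma_iff, mem_coe, mem_filter, mem_univ, true_and,
      extensions] at h ⊢
    obtain ⟨hB, hcB, hcompl⟩ := h
    refine ⟨⟨by rw [card_insert_of_notMem hcB, hB.1], hcompl,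
      hB.2.2.mono (subset_insert _ _)⟩, mem_insert_self _ _, ?_⟩
    rwa [erase_insert hcB]
  · rintro ⟨C, c⟩ h
    simp only [coe_sigma, Set.mem_sigma_iff, mem_coe, mem_filter, mem_univ, true_and,
      extensions] at h ⊢
    refine ⟨h.2.2, notMem_erase _ _, ?_⟩
    rw [insert_erase h.2.1]
    exact h.1.2.1
  · rintro ⟨B, c⟩ h
    simp only [coe_sigma, Set.mem_sigma_iff, mem_coe, mem_filter, mem_univ, true_and,
      extensions] at h
    simp [erase_insert h.2.1]
  · rintro ⟨C, c⟩ h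
    simp only [coe_sigma, Set.mem_sigma_iff, mem_coe, mem_filter, mem_univ, true_and] at h
    simp [insert_erase h.2.1]

variable {μ b}

open scoped Classical in
theorem Nondegenerate.card_filter_isVertex_erase (hn : 0 < n) (hrow : ∀ i, ∑ j, μ i j = 1)
    (hb : Nondegenerate (column μ) b) {C : Finset (ColumnIndex n)} (hC : IsEdge μ b C) :
    #{c ∈ C | IsVertex μ b (C.erase c)} = 2 := by
  have hfinrank : #C = finrank ℝ (Fin n → ℝ) + 1 := by rw [finrank_fin_fun, hC.1]
  rw [filter_congr fun c hc => show IsVertex μ b (C.erase c) ↔ Feasible (column μ) b (C.erase c)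
    from ⟨fun h => h.2.2, fun h => ⟨by rw [card_erase_of_mem hc, hC.1]; rfl,
      hC.2.1.mono (erase_subset _ _), h⟩⟩]
  exact le_antisymm (hb.card_filter_feasible_erase_le_two hfinrank)
    (two_le_card_filter_feasible_erase _ (sum_column_pos hn hrow) (by omega) hC.2.2)

open scoped Classical in
theorem Nondegenerate.even_card_isVertex_none_notMem (hn : 0 < n)
    (hrow : ∀ i, ∑ j, μ i j = 1) (hb : Nondegenerate (column μ) b) :
    Even #{B | IsVertex μ b B ∧ none ∉ B} := by
  have heven : Even (∑ B with IsVertex μ b B, #(extensions B)) := by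
    rw [sum_card_extensions, sum_congr rfl fun C hC =>
      hb.card_filter_isVertex_erase hn hrow (mem_filter.1 hC).2]
    simp
  rw [even_sum_iff_even_card_odd, filter_filter] at heven
  rwa [filter_congr fun B _ => and_congr_right fun hB => hB.2.1.odd_card_extensions_iff] at heven

theorem isVertex_unitBasis (hb : 0 ≤ b) : IsVertex μ b (unitBasis n) := by
  refine ⟨card_unitBasis, ?_, fun c => c.elim 0 (Sum.elim 0 b), fun c => ?_, fun c hc => ?_, ?_⟩
  · rintro c hc
    obtain ⟨j, -, hj⟩ := mem_image.1 hc
    cases Option.some.inj hj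
    simp [unitBasis]
  · rcases c with _ | i | j
    exacts [le_rfl, le_rfl, hb j]
  · rcases c with _ | i | j
    · rfl
    · rfl
    · simp [unitBasis] at hc
  · rw [sum_smul_column]
    ext j
    simp [vecMul]

theorem IsVertex.exists_isComplementarySolution {B : Finset (ColumnIndex n)}
    (hB : IsVertex μ b B) (hnone : none ∉ B) (hne : B ≠ unitBasis n) :
    ∃ a, IsComplementarySolution μ b a := by
  obtain ⟨hcard, hcompl, x, hx0, hxB, hx⟩ := hB
  obtain ⟨i₀, hi₀⟩ : ∃ i, some (.inl i) ∈ B := by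
    by_contra! h
    refine hne (eq_of_subset_of_card_le (fun c hc => ?_) (by rw [hcard, card_unitBasis]))
    rcases c with _ | i | j
    · exact absurd hc hnone
    · exact absurd hc (h i)
    · simp [unitBasis]
  set a := fun i => x (some (.inl i))
  have hslack : ∀ j, b j - (a ᵥ* μ) j = x (some (.inr j)) := fun j => by
    have := congrFun (sum_smul_column μ x) j
    rw [hx, hxB none hnone] at this
    simp [this, a]
  refine ⟨a, fun i => hx0 _, fun j => ?_, fun i => ?_, i₀, ?_⟩
  · linarith [hslack j, hx0 (some (.inr j))]
  · rw [hslack i]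
    by_cases h : some (.inl i) ∈ B
    · rw [hxB (some (.inr i)) (hcompl _ h), mul_zero]
    · rw [show a i = 0 from hxB _ h, zero_mul]
  · linarith [hslack i₀, hxB (some (.inr i₀)) (hcompl _ hi₀)]

open scoped Classical in
theorem Nondegenerate.exists_isComplementarySolution (hn : 0 < n)
    (hrow : ∀ i, ∑ j, μ i j = 1) (hb : Nondegenerate (column μ) b) (hb0 : 0 ≤ b) :
    ∃ a, IsComplementarySolution μ b a := by
  set T : Finset (Finset (ColumnIndex n)) := {B | IsVertex μ b B ∧ none ∉ B}
  have hunit : unitBasis n ∈ T :=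
    mem_filter.2 ⟨mem_univ _, isVertex_unitBasis hb0, by simp [unitBasis]⟩
  have hT : 1 < #T := by
    obtain ⟨m, hm⟩ := hb.even_card_isVertex_none_notMem hn hrow
    have hm' : #T = m + m := hm
    have := card_pos.2 ⟨_, hunit⟩
    omega
  obtain ⟨B, hB, hne⟩ := exists_mem_ne hT (unitBasis n)
  obtain ⟨-, hBv, hnone⟩ := mem_filter.1 hB
  exact hBv.exists_isComplementarySolution hnone hne

end Tableau

theorem exists_isComplementarySolution {n : ℕ} {μ : Matrix (Fin n) (Fin n) ℝ} (hn : 0 < n)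
    (hrow : ∀ i, ∑ j, μ i j = 1) {b : Fin n → ℝ} (hb : 0 ≤ b) :
    ∃ a, IsComplementarySolution μ b a := by
  set U : Set (Fin n → ℝ) := Set.univ.pi fun _ => Set.Ioi 0
  have hU : IsOpen U := isOpen_set_pi Set.finite_univ fun _ _ => isOpen_Ioi
  have hclosed := isClosed_setOf_exists_isComplementarySolution μ hrow
  have hsub : U ∩ {b | Nondegenerate (column μ) b} ⊆ {b | ∃ a, IsComplementarySolution μ b a} :=
    fun b hb => hb.2.exists_isComplementarySolution hn hrow fun j => (hb.1 j trivial).le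
  have hUsub : U ⊆ {b | ∃ a, IsComplementarySolution μ b a} := fun b hbU =>
    closure_minimal hsub hclosed ((dense_setOf_nondegenerate _).open_subset_closure_inter hU hbU)
  refine closure_minimal hUsub hclosed ?_
  rw [closure_pi_set]
  exact fun j _ => by simpa using hb j

end Lemke

theorem exists_mem_stdSimplex_of_mem_convexHull_range {ι E : Type*} [Fintype ι]
    [AddCommGroup E] [Module ℝ E] {x : ι → E} {y : E} (hy : y ∈ convexHull ℝ (Set.range x)) :
    ∃ w ∈ stdSimplex ℝ ι, ∑ i, w i • x i = y := by
  classical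
  have hrange :
      Set.range x = Fintype.linearCombination ℝ x '' Set.range fun i => Pi.single i 1 := by
    rw [← Set.range_comp]
    simp [Function.comp_def, Fintype.linearCombination_apply_single]
  rw [hrange, ← LinearMap.image_convexHull, convexHull_rangle_single_eq_stdSimplex] at hy
  obtain ⟨w, hw, rfl⟩ := hy
  exact ⟨w, hw, Fintype.linearCombination_apply ℝ x w⟩

theorem stmt5_general {k : ℕ} (x q : Fin (k + 1) → EuclideanSpace ℝ (Fin k))
    (hq : ∀ i, q i ∈ convexHull ℝ (x '' {i}ᶜ))
    (h0 : (0 : EuclideanSpace ℝ (Fin k)) ∈ convexHull ℝ (Set.range x)) :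
    ∃ I : Finset (Fin (k + 1)), I.Nonempty ∧
      (0 : EuclideanSpace ℝ (Fin k)) ∈ convexHull ℝ (q '' ↑I ∪ x '' ↑(Iᶜ)) := by
  obtain ⟨b, hb, hbx⟩ := exists_mem_stdSimplex_of_mem_convexHull_range h0
  choose μ hμ using fun i => exists_mem_stdSimplex_of_mem_convexHull_range
    (convexHull_mono (Set.image_subset_range x _) (hq i))
  have hrow : ∀ i, ∑ j, μ i j = 1 := fun i => (hμ i).1.2
  obtain ⟨a, ha⟩ := Lemke.exists_isComplementarySolution k.succ_pos hrow hb.1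
  obtain ⟨j, hj⟩ := ha.2.2.2
  exact ⟨_, ⟨j, by simpa using hj⟩, hbx ▸ ha.mem_convexHull hrow hb.2 fun i => (hμ i).2⟩

/-- Let `x 0, …, x k` be the vertices of a non-degenerate simplex in `ℝᵏ`, and let
`q i` lie on the facet opposite to `x i` for each `i`. If `0` lies in the simplex, then
there is a nonempty subset `I` of the indices such that `0` lies in the convex hull of
`{q i : i ∈ I} ∪ {x j : j ∉ I}`. -/
theorem stmt5 {k : ℕ} (x q : Fin (k + 1) → EuclideanSpace ℝ (Fin k))
    (hx : AffineIndependent ℝ x)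
    (hq : ∀ i, q i ∈ convexHull ℝ (x '' {i}ᶜ))
    (h0 : (0 : EuclideanSpace ℝ (Fin k)) ∈ convexHull ℝ (Set.range x)) :
    ∃ I : Finset (Fin (k + 1)), I.Nonempty ∧
      (0 : EuclideanSpace ℝ (Fin k)) ∈ convexHull ℝ (q '' ↑I ∪ x '' ↑(Iᶜ)) :=
  stmt5_general x q hq h0
end

section
/- Let K be a smooth centrally symmetric convex body in ℝⁿ and let q₁,…,q_m ∈ ∂K (m ≥ 2) be boundary points such that 0 lies in the convex hull of the outer normal vectors {n_K(q₁),…,n_K(q_m)} to K at these points. Then the K-length of the closed polygon q₁q₂⋯q_m is at least 4. -/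
open Finset

open Filter Set Topology
open scoped RealInnerProductSpace

lemma convex_subgrad {F : Type*} [NormedAddCommGroup F] [NormedSpace ℝ F]
    {f : F → ℝ} (hf : ConvexOn ℝ Set.univ f) {x : F} {φ : F →L[ℝ] ℝ}
    (hd : HasFDerivAt f φ x) (y : F) : f x + φ (y - x) ≤ f y := by
  set h : ℝ → ℝ := fun t : ℝ => f (x + t • (y - x)) with hh
  have hline : HasDerivAt h (φ (y - x)) 0 := by
    have h1 : HasDerivAt (fun t : ℝ => x + t • (y - x)) (y - x) 0 := by
      simpa using ((hasDerivAt_id (0:ℝ)).smul_const (y - x)).const_add x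
    have h2 : HasFDerivAt f φ (x + (0:ℝ) • (y - x)) := by simpa using hd
    exact h2.comp_hasDerivAt 0 h1
  have hslope : ∀ᶠ t in 𝓝[>] (0:ℝ), slope h 0 t ≤ f y - f x := by
    filter_upwards [Ioc_mem_nhdsGT_of_mem (by constructor <;> norm_num :
        (0:ℝ) ∈ Set.Ico (0:ℝ) 1)] with t ht
    have ht0 : 0 < t := ht.1
    have ht1 : t ≤ 1 := ht.2
    have hcv : f ((1 - t) • x + t • y) ≤ (1 - t) * f x + t * f y :=
      hf.2 (mem_univ x) (mem_univ y) (by linarith) ht0.le (by ring)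
    have hxt : (1 - t) • x + t • y = x + t • (y - x) := by
      simp [smul_sub, sub_smul]; abel
    rw [hxt] at hcv
    have : h t - h 0 ≤ t * (f y - f x) := by
      simp only [hh, zero_smul, add_zero]
      calc f (x + t • (y - x)) - f x ≤ ((1 - t) * f x + t * f y) - f x := by linarith
        _ = t * (f y - f x) := by ring
    rw [slope_def_field, div_le_iff₀ (by linarith : (0:ℝ) < t - 0)]
    calc h t - h 0 ≤ t * (f y - f x) := this
      _ = (f y - f x) * (t - 0) := by ring
  have htend : Tendsto (slope h 0) (𝓝[>] 0) (𝓝 (φ (y - x))) :=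
    (hasDerivAt_iff_tendsto_slope.mp hline).mono_left
      (nhdsWithin_mono _ (fun t ht => ne_of_gt ht))
  have := le_of_tendsto htend hslope
  linarith

lemma exists_center {E : Type*} [AddCommGroup E] [Module ℝ E] (g : E → ℝ)
    (hg0 : g 0 = 0) (hgadd : ∀ x y, g (x + y) ≤ g x + g y)
    (hgneg : ∀ x, g (-x) = g x) (hgnn : ∀ x, 0 ≤ g x)
    (hgsmul : ∀ r : ℝ, 0 ≤ r → ∀ x, g (r • x) = r * g x)
    {m : ℕ} (hm : 0 < m) (q : ℕ → E) :
    ∃ c : E, ∀ i < m, g (q i - c) ≤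
      (∑ k ∈ Finset.range m, g (q ((k + 1) % m) - q (k % m))) / 4 := by
  classical
  have hgsub : ∀ x y z : E, g (x - z) ≤ g (x - y) + g (y - z) := by
    intro x y z
    have := hgadd (x - y) (y - z)
    simpa using this
  set e : ℕ → ℝ := fun k => g (q ((k + 1) % m) - q (k % m)) with hedef
  set ℓ : ℕ → ℝ := fun j => ∑ k ∈ Finset.range j, e k with hldef
  set L : ℝ := ∑ k ∈ Finset.range m, e k with hLdef
  have henn : ∀ k, 0 ≤ e k := fun k => hgnn _
  have hLm : L = ℓ m := rfl
  have hlmono : ∀ a b, a ≤ b → ℓ a ≤ ℓ b := by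
    intro a b hab
    exact Finset.sum_le_sum_of_subset_of_nonneg
      (Finset.range_subset_range.mpr hab) (fun k _ _ => henn k)
  have hLnn : 0 ≤ L := Finset.sum_nonneg fun k _ => henn k
  have chain : ∀ a b, a ≤ b → g (q (b % m) - q (a % m)) ≤ ℓ b - ℓ a := by
    intro a b hab
    induction b, hab using Nat.le_induction with
    | base => simp [hg0]
    | succ b hab ih =>
      have h1 : g (q ((b + 1) % m) - q (a % m)) ≤
          g (q ((b + 1) % m) - q (b % m)) + g (q (b % m) - q (a % m)) := hgsub _ _ _
      have h2 : ℓ (b + 1) = ℓ b + e b := Finset.sum_range_succ e b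
      have h3 : g (q ((b + 1) % m) - q (b % m)) = e b := rfl
      rw [h3] at h1
      linarith
  -- pick the halfway edge index j
  set S := (Finset.range m).filter (fun i => ℓ i ≤ L / 2) with hSdef
  have hS0 : 0 ∈ S := by
    rw [hSdef, Finset.mem_filter]
    refine ⟨Finset.mem_range.mpr hm, ?_⟩
    have : ℓ 0 = 0 := rfl
    rw [this]; linarith
  set j := S.max' ⟨0, hS0⟩ with hjdef
  have hjS : j ∈ S := S.max'_mem _
  have hjm : j < m := Finset.mem_range.mp (Finset.mem_filter.mp hjS).1
  have hj1 : ℓ j ≤ L / 2 := (Finset.mem_filter.mp hjS).2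
  have hj2 : L / 2 ≤ ℓ (j + 1) := by
    by_cases h : j + 1 = m
    · rw [h, ← hLm]; linarith
    · have hj1m : j + 1 < m := by omega
      by_contra hc
      push_neg at hc
      have hmem : j + 1 ∈ S := by
        rw [hSdef, Finset.mem_filter]
        exact ⟨Finset.mem_range.mpr hj1m, hc.le⟩
      have := S.le_max' _ hmem
      omega
  have hlj1 : ℓ (j + 1) = ℓ j + e j := Finset.sum_range_succ e j
  have hjmod : j % m = j := Nat.mod_eq_of_lt hjm
  set v : E := q ((j + 1) % m) - q (j % m) with hvdef
  have hgv : g v = e j := rfl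
  set s : ℝ := if e j = 0 then 0 else (L / 2 - ℓ j) / e j with hsdef
  have hej0 : 0 ≤ e j := henn j
  have hs0 : 0 ≤ s := by
    rw [hsdef]; split
    · exact le_rfl
    · exact div_nonneg (by linarith) hej0
  have hs1 : s ≤ 1 := by
    rw [hsdef]; split
    · exact zero_le_one
    · next h =>
      rw [div_le_one (lt_of_le_of_ne hej0 (Ne.symm h))]
      linarith
  set p : E := q (j % m) + s • v with hpdef
  have gp1 : g (p - q (j % m)) = L / 2 - ℓ j := by
    have hps : p - q (j % m) = s • v := by rw [hpdef]; abel
    rw [hps, hgsmul s hs0, hgv]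
    rw [hsdef]; split
    · next h => rw [h] at hlj1; simp; linarith
    · next h => exact div_mul_cancel₀ _ h
  have gp2 : g (q ((j + 1) % m) - p) = ℓ (j + 1) - L / 2 := by
    have hps : q ((j + 1) % m) - p = (1 - s) • v := by
      rw [hpdef, hvdef, sub_smul, one_smul]; abel
    rw [hps, hgsmul (1 - s) (by linarith), hgv]
    rw [hsdef]; split
    · next h => rw [h] at hlj1; simp [h]; linarith
    · next h =>
      rw [sub_mul, one_mul, div_mul_cancel₀ _ h]
      linarith
  refine ⟨(2:ℝ)⁻¹ • (q (0 % m) + p), fun i hi => ?_⟩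
  have himod : i % m = i := Nat.mod_eq_of_lt hi
  have hdecomp : q i - (2:ℝ)⁻¹ • (q (0 % m) + p)
      = (2:ℝ)⁻¹ • ((q i - q (0 % m)) + (q i - p)) := by
    module
  have hhalf : g ((q i - q (0 % m)) + (q i - p)) ≤ L / 2 := by
    rcases le_or_gt i j with hij | hij
    · have b1 : g (q i - q (0 % m)) ≤ ℓ i := by
        have := chain 0 i (Nat.zero_le i)
        have hl0 : ℓ 0 = 0 := rfl
        rw [himod] at this
        linarith [this]
      have b2 : g (q i - p) ≤ g (q i - q (j % m)) + g (q (j % m) - p) := hgsub _ _ _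
      have b3 : g (q i - q (j % m)) ≤ ℓ j - ℓ i := by
        have := chain i j hij
        rw [← hgneg (q (j % m) - q (i % m)), neg_sub, himod] at this
        exact this
      have b4 : g (q (j % m) - p) = L / 2 - ℓ j := by
        rw [← hgneg (p - q (j % m)), neg_sub] at gp1
        exact gp1
      calc g ((q i - q (0 % m)) + (q i - p)) ≤ g (q i - q (0 % m)) + g (q i - p) := hgadd _ _
        _ ≤ ℓ i + ((ℓ j - ℓ i) + (L / 2 - ℓ j)) := by
            rw [← b4]; exact add_le_add b1 (b2.trans (add_le_add_left b3 _))
        _ = L / 2 := by ring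
    · have hji : j + 1 ≤ i := hij
      have b1 : g (q i - q (0 % m)) ≤ L - ℓ i := by
        have := chain i m hi.le
        rw [← hgneg (q (m % m) - q (i % m)), neg_sub, himod, Nat.mod_self] at this
        have hl0 : (0:ℕ) % m = 0 := Nat.zero_mod m
        rw [hl0]
        rw [hLm]; linarith [this]
      have b2 : g (q i - p) ≤ g (q i - q ((j + 1) % m)) + g (q ((j + 1) % m) - p) :=
        hgsub _ _ _
      have b3 : g (q i - q ((j + 1) % m)) ≤ ℓ i - ℓ (j + 1) := by
        have := chain (j + 1) i hji
        rw [himod] at this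
        exact this
      calc g ((q i - q (0 % m)) + (q i - p)) ≤ g (q i - q (0 % m)) + g (q i - p) := hgadd _ _
        _ ≤ (L - ℓ i) + ((ℓ i - ℓ (j + 1)) + (ℓ (j + 1) - L / 2)) := by
            rw [← gp2]; exact add_le_add b1 (b2.trans (add_le_add_left b3 _))
        _ = L / 2 := by ring
  calc g (q i - (2:ℝ)⁻¹ • (q (0 % m) + p))
      = (2:ℝ)⁻¹ * g ((q i - q (0 % m)) + (q i - p)) := by
        rw [hdecomp, hgsmul _ (by norm_num)]
    _ ≤ (2:ℝ)⁻¹ * (L / 2) := by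
        have : (0:ℝ) ≤ (2:ℝ)⁻¹ := by norm_num
        exact mul_le_mul_of_nonneg_left hhalf this
    _ = L / 4 := by ring


/-- For a smooth centrally symmetric convex body `K`, if `q 0, …, q (m-1)` (`m ≥ 2`) are
boundary points of `K` such that `0` lies in the convex hull of the outer normals
`∇g_K (q i)`, then the `K`-length of the closed polygon through them is at least `4`. -/
theorem stmt7 {n m : ℕ} (K : Set (EuclideanSpace ℝ (Fin n)))
    (hKconv : Convex ℝ K) (hKcpt : IsCompact K) (hK0 : (0 : EuclideanSpace ℝ (Fin n)) ∈ interior K)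
    (hKsymm : K = -K)
    (hKsmooth : ContDiffOn ℝ (⊤ : ℕ∞) (gauge K) {(0 : EuclideanSpace ℝ (Fin n))}ᶜ)
    (hm : 2 ≤ m)
    (q : ℕ → EuclideanSpace ℝ (Fin n))
    (hbd : ∀ i < m, gauge K (q i) = 1)
    (h0 : (0 : EuclideanSpace ℝ (Fin n)) ∈
      convexHull ℝ ((fun i => gradient (gauge K) (q i)) '' Set.Iio m)) :
    4 ≤ KLength K m q := by
  classical
  have habs : Absorbent ℝ K := absorbent_nhds_zero (mem_interior_iff_mem_nhds.mp hK0)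
  have hsymm' : ∀ x ∈ K, -x ∈ K := fun x hx => by
    rw [hKsymm]; exact Set.neg_mem_neg.mpr hx
  have hgneg : ∀ x, gauge K (-x) = gauge K x := fun x => gauge_neg hsymm' x
  have hgadd : ∀ x y, gauge K (x + y) ≤ gauge K x + gauge K y := gauge_add_le hKconv habs
  have hgnn : ∀ x : EuclideanSpace ℝ (Fin n), 0 ≤ gauge K x := fun x => gauge_nonneg x
  have hgsmul : ∀ r : ℝ, 0 ≤ r → ∀ x : EuclideanSpace ℝ (Fin n),
      gauge K (r • x) = r * gauge K x := fun r hr x => by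
    rw [gauge_smul_of_nonneg hr, smul_eq_mul]
  have hcvx : ConvexOn ℝ Set.univ (gauge K) := by
    refine ⟨convex_univ, fun x _ y _ a b ha hb hab => ?_⟩
    calc gauge K (a • x + b • y) ≤ gauge K (a • x) + gauge K (b • y) := hgadd _ _
      _ = a * gauge K x + b * gauge K y := by rw [hgsmul a ha, hgsmul b hb]
      _ = a • gauge K x + b • gauge K y := by simp [smul_eq_mul]
  -- subgradient facts
  have hsg : ∀ i < m, ∀ y, (1 : ℝ) + ⟪gradient (gauge K) (q i), y - q i⟫ ≤ gauge K y := by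
    intro i hi y
    have hq1 : gauge K (q i) = 1 := hbd i hi
    have hqne : q i ≠ 0 := by
      intro h; rw [h, gauge_zero] at hq1; norm_num at hq1
    have hdiff : DifferentiableAt ℝ (gauge K) (q i) :=
      (hKsmooth.contDiffAt (isOpen_compl_singleton.mem_nhds hqne)).differentiableAt (by simp)
    have hFD := hdiff.hasGradientAt.hasFDerivAt
    have := convex_subgrad hcvx hFD y
    rw [hq1] at this
    simpa [InnerProductSpace.toDual_apply_apply] using this
  have hNq : ∀ i < m, ⟪gradient (gauge K) (q i), q i⟫ = 1 := by
    intro i hi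
    have h1 := hsg i hi 0
    have h2 := hsg i hi ((2:ℝ) • q i)
    rw [hgsmul 2 (by norm_num), hbd i hi] at h2
    have e1 : (0 : EuclideanSpace ℝ (Fin n)) - q i = -(q i) := by abel
    have e2 : (2:ℝ) • q i - q i = q i := by rw [two_smul]; abel
    rw [e1, inner_neg_right, gauge_zero] at h1
    rw [e2] at h2
    linarith
  have hNle : ∀ i < m, ∀ x, ⟪gradient (gauge K) (q i), x⟫ ≤ gauge K x := by
    intro i hi x
    have := hsg i hi x
    rw [inner_sub_right, hNq i hi] at this
    linarith
  obtain ⟨c, hc⟩ := exists_center (gauge K) gauge_zero hgadd hgneg hgnn hgsmul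
    (show 0 < m by omega) q
  have hsum_eq : (∑ k ∈ Finset.range m, gauge K (q ((k + 1) % m) - q (k % m)))
      = KLength K m q := by
    rw [KLength]
    exact Finset.sum_congr rfl fun k hk => by
      rw [Nat.mod_eq_of_lt (Finset.mem_range.mp hk)]
  rw [hsum_eq] at hc
  set L := KLength K m q with hLdef
  -- unpack the convex combination
  rw [_root_.convexHull_eq] at h0
  obtain ⟨ι, t, w, z, hw0, hw1, hz, hcm⟩ := h0
  have hsum0 : ∑ i ∈ t, w i • z i = 0 := by
    rw [← Finset.centerMass_eq_of_sum_1 _ _ hw1]; exact hcm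
  have hterm : ∀ i ∈ t, w i * (1 - ⟪z i, c⟫) ≤ w i * (L / 4) := by
    intro i hi
    obtain ⟨k, hk, hzk⟩ := hz i hi
    have hk' : k < m := hk
    have key : (1 : ℝ) - ⟪z i, c⟫ ≤ L / 4 := by
      have e1 : (1 : ℝ) - ⟪z i, c⟫ = ⟪z i, q k - c⟫ := by
        rw [inner_sub_right, ← hzk]
        simp only []
        rw [hNq k hk']
      rw [e1, ← hzk]
      exact (hNle k hk' _).trans (hc k hk')
    exact mul_le_mul_of_nonneg_left key (hw0 i hi)
  have hinner0 : ∑ i ∈ t, w i * ⟪z i, c⟫ = 0 := by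
    have : ∑ i ∈ t, w i * ⟪z i, c⟫ = ⟪∑ i ∈ t, w i • z i, c⟫ := by
      rw [sum_inner]
      exact Finset.sum_congr rfl fun i _ => (real_inner_smul_left _ _ _).symm
    rw [this, hsum0, inner_zero_left]
  have hone : (1 : ℝ) = ∑ i ∈ t, w i * (1 - ⟪z i, c⟫) := by
    have hsplit : ∑ i ∈ t, w i * (1 - ⟪z i, c⟫)
        = (∑ i ∈ t, w i) - ∑ i ∈ t, w i * ⟪z i, c⟫ := by
      rw [← Finset.sum_sub_distrib]
      exact Finset.sum_congr rfl fun i _ => by ring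
    rw [hsplit, hw1, hinner0, sub_zero]
  have hfin : (1 : ℝ) ≤ L / 4 := by
    calc (1 : ℝ) = ∑ i ∈ t, w i * (1 - ⟪z i, c⟫) := hone
      _ ≤ ∑ i ∈ t, w i * (L / 4) := Finset.sum_le_sum hterm
      _ = (∑ i ∈ t, w i) * (L / 4) := by rw [Finset.sum_mul]
      _ = L / 4 := by rw [hw1, one_mul]
  linarith
end

section
/- Let K be a centrally symmetric convex body in ℝⁿ, and let q₁, q₂, q₃ ∈ ∂K be such that the closed polygon q₁q₂q₃ has K-length strictly less than 4. Then 0 does not lie in the convex hull of any choice of outer normals to K at q₁, q₂, q₃ (i.e. for any supporting functionals u_i of K at q_i, 0 ∉ conv{u₁, u₂, u₃}). -/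
open scoped RealInnerProductSpace

open Set

/-!
Write `0 = ∑ lᵢ uᵢ` as a convex combination. Since `⟪uᵢ, qᵢ⟫ = 1`, for every `j` we get
`∑ᵢ lᵢ ⟪uᵢ, qᵢ - qⱼ⟫ = 1`, where each term is at most `lᵢ ‖qᵢ - qⱼ‖_K` and at most `2 lᵢ`; the
latter forces `lⱼ ≤ 1/2`. Summing these identities with weights `1 - lⱼ` gives
`∑ᵢⱼ lᵢ (1 - lⱼ) ‖qᵢ - qⱼ‖_K ≥ m - 1`, and the symmetrized weight
`lᵢ (1 - lⱼ) + lⱼ (1 - lᵢ) = (1 - (1 - 2 lᵢ) (1 - 2 lⱼ)) / 2` is at most `1/2`, so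
`∑ᵢⱼ ‖qᵢ - qⱼ‖_K ≥ 4 (m - 1)`. For a triangle the left side is twice its `K`-length.
-/

theorem exists_weights_of_mem_convexHull_range {ι E : Type*} [Fintype ι] [AddCommGroup E]
    [Module ℝ E] {v : ι → E} {x : E} (hx : x ∈ convexHull ℝ (range v)) :
    ∃ w : ι → ℝ, (∀ i, 0 ≤ w i) ∧ ∑ i, w i = 1 ∧ ∑ i, w i • v i = x := by
  classical
  have hv : range v = Fintype.linearCombination ℝ v '' range fun i ↦ Pi.single i 1 := by
    rw [← range_comp]
    congr 1
    ext i
    simp [Fintype.linearCombination_apply, Pi.single_apply]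
  rw [hv, ← LinearMap.image_convexHull, convexHull_rangle_single_eq_stdSimplex] at hx
  obtain ⟨w, ⟨hw₀, hw₁⟩, rfl⟩ := hx
  exact ⟨w, hw₀, hw₁, (Fintype.linearCombination_apply ℝ v w).symm⟩

section Weights

variable {ι : Type*} [Fintype ι] {l : ι → ℝ}

theorem le_half_of_sum_mul_eq_one [DecidableEq ι] {t : ι → ℝ} {j : ι} (hl₀ : ∀ i, 0 ≤ l i)
    (hl₁ : ∑ i, l i = 1) (ht : ∑ i, l i * t i = 1) (htj : t j = 0) (ht₂ : ∀ i, t i ≤ 2) :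
    l j ≤ 1 / 2 := by
  have hsum : ∑ i ∈ Finset.univ.erase j, l i * t i ≤ ∑ i ∈ Finset.univ.erase j, 2 * l i :=
    Finset.sum_le_sum fun i _ ↦ by nlinarith [hl₀ i, ht₂ i]
  rw [← Finset.mul_sum, Finset.sum_erase _ (by rw [htj, mul_zero]),
    Finset.sum_erase_eq_sub (Finset.mem_univ j), hl₁, ht] at hsum
  linarith

theorem four_mul_card_sub_one_le_sum {t d : ι → ι → ℝ} (hl₀ : ∀ i, 0 ≤ l i)
    (hl₁ : ∑ i, l i = 1) (hl : ∀ i, l i ≤ 1 / 2) (ht : ∀ j, ∑ i, l i * t i j = 1)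
    (htd : ∀ i j, t i j ≤ d i j) (hd₀ : ∀ i j, 0 ≤ d i j) (hd : ∀ i j, d i j = d j i) :
    4 * (Fintype.card ι - 1 : ℝ) ≤ ∑ i, ∑ j, d i j := by
  have hT : (Fintype.card ι - 1 : ℝ) ≤ ∑ i, ∑ j, l i * (1 - l j) * d i j := calc
    (Fintype.card ι - 1 : ℝ) = ∑ j, (1 - l j) * ∑ i, l i * t i j := by
      simp [ht, Finset.sum_sub_distrib, hl₁]
    _ ≤ ∑ j, ∑ i, l i * (1 - l j) * d i j := by
      refine Finset.sum_le_sum fun j _ ↦ ?_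
      rw [Finset.mul_sum]
      refine Finset.sum_le_sum fun i _ ↦ ?_
      nlinarith [mul_nonneg (hl₀ i) (by linarith [hl j] : 0 ≤ 1 - l j), htd i j]
    _ = ∑ i, ∑ j, l i * (1 - l j) * d i j := Finset.sum_comm
  have hswap : ∑ i, ∑ j, l i * (1 - l j) * d i j = ∑ i, ∑ j, l j * (1 - l i) * d i j := by
    rw [Finset.sum_comm]
    exact Finset.sum_congr rfl fun i _ ↦ Finset.sum_congr rfl fun j _ ↦ by rw [hd]
  have hpair : ∑ i, ∑ j, (l i * (1 - l j) + l j * (1 - l i)) * d i j ≤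
      ∑ i, ∑ j, 1 / 2 * d i j :=
    Finset.sum_le_sum fun i _ ↦ Finset.sum_le_sum fun j _ ↦ by
      nlinarith [mul_nonneg (mul_nonneg (by linarith [hl i] : 0 ≤ 1 - 2 * l i)
        (by linarith [hl j] : 0 ≤ 1 - 2 * l j)) (hd₀ i j)]
  simp only [add_mul, Finset.sum_add_distrib, ← hswap, ← Finset.mul_sum] at hpair
  linarith

end Weights

section Gauge

variable {E : Type*} [NormedAddCommGroup E] [InnerProductSpace ℝ E] {K : Set E}

def IsUnitOuterNormal (K : Set E) (q u : E) : Prop :=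
  ⟪u, q⟫ = 1 ∧ ∀ y ∈ K, ⟪u, y⟫ ≤ 1

theorem gauge_sub_comm (hK : ∀ x ∈ K, -x ∈ K) (x y : E) : gauge K (x - y) = gauge K (y - x) := by
  rw [← neg_sub, gauge_neg hK]

theorem inner_le_gauge (hK : Absorbent ℝ K) {u : E} (hu : ∀ y ∈ K, ⟪u, y⟫ ≤ 1) (x : E) :
    ⟪u, x⟫ ≤ gauge K x := by
  refine le_csInf hK.gauge_set_nonempty ?_
  rintro r ⟨hr, y, hy, rfl⟩
  rw [real_inner_smul_right]
  nlinarith [hu y hy]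

theorem IsUnitOuterNormal.inner_sub_le_two (hK : Absorbent ℝ K) (hsymm : ∀ x ∈ K, -x ∈ K)
    {q u x : E} (hu : IsUnitOuterNormal K q u) (hx : gauge K x ≤ 1) : ⟪u, q - x⟫ ≤ 2 := by
  have := inner_le_gauge hK hu.2 (-x)
  rw [gauge_neg hsymm, inner_neg_right] at this
  rw [inner_sub_right, hu.1]
  linarith

theorem sum_mul_inner_sub_eq_one {ι : Type*} [Fintype ι] {l : ι → ℝ} {q u : ι → E}
    (hl₁ : ∑ i, l i = 1) (hlu : ∑ i, l i • u i = 0) (hu : ∀ i, ⟪u i, q i⟫ = 1) (x : E) :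
    ∑ i, l i * ⟪u i, q i - x⟫ = 1 := by
  have hx : ∑ i, l i * ⟪u i, x⟫ = 0 := by
    simp_rw [← real_inner_smul_left, ← sum_inner, hlu, inner_zero_left]
  simp_rw [inner_sub_right, mul_sub, Finset.sum_sub_distrib, hx, hu, mul_one, hl₁, sub_zero]

theorem four_mul_card_sub_one_le_sum_gauge_sub {ι : Type*} [Fintype ι] (hK : Absorbent ℝ K)
    (hsymm : ∀ x ∈ K, -x ∈ K) {q u : ι → E} (hq : ∀ i, gauge K (q i) ≤ 1)
    (hu : ∀ i, IsUnitOuterNormal K (q i) (u i)) (h0 : (0 : E) ∈ convexHull ℝ (range u)) :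
    4 * (Fintype.card ι - 1 : ℝ) ≤ ∑ i, ∑ j, gauge K (q i - q j) := by
  classical
  obtain ⟨l, hl₀, hl₁, hlu⟩ := exists_weights_of_mem_convexHull_range h0
  have hrow := sum_mul_inner_sub_eq_one hl₁ hlu (fun i ↦ (hu i).1)
  refine four_mul_card_sub_one_le_sum hl₀ hl₁ (fun j ↦ ?_) (fun j ↦ hrow (q j))
    (fun i j ↦ inner_le_gauge hK (hu i).2 _) (fun _ _ ↦ gauge_nonneg _)
    (fun _ _ ↦ gauge_sub_comm hsymm _ _)
  exact le_half_of_sum_mul_eq_one hl₀ hl₁ (hrow (q j)) (by rw [sub_self, inner_zero_right])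
    fun i ↦ (hu i).inner_sub_le_two hK hsymm (hq j)

end Gauge

theorem stmt16_general {n : ℕ} (K : Set (EuclideanSpace ℝ (Fin n)))
    (hK0 : (0 : EuclideanSpace ℝ (Fin n)) ∈ interior K)
    (hKsymm : K = -K)
    (q₁ q₂ q₃ : EuclideanSpace ℝ (Fin n))
    (hq₁ : gauge K q₁ = 1) (hq₂ : gauge K q₂ = 1) (hq₃ : gauge K q₃ = 1)
    (hlen : gauge K (q₂ - q₁) + gauge K (q₃ - q₂) + gauge K (q₁ - q₃) < 4)
    (u₁ u₂ u₃ : EuclideanSpace ℝ (Fin n))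
    (hu₁ : ⟪u₁, q₁⟫ = 1 ∧ ∀ y ∈ K, ⟪u₁, y⟫ ≤ 1)
    (hu₂ : ⟪u₂, q₂⟫ = 1 ∧ ∀ y ∈ K, ⟪u₂, y⟫ ≤ 1)
    (hu₃ : ⟪u₃, q₃⟫ = 1 ∧ ∀ y ∈ K, ⟪u₃, y⟫ ≤ 1) :
    (0 : EuclideanSpace ℝ (Fin n)) ∉ convexHull ℝ {u₁, u₂, u₃} := by
  intro h0
  have hK : Absorbent ℝ K := absorbent_nhds_zero (mem_interior_iff_mem_nhds.1 hK0)
  have hsymm : ∀ x ∈ K, -x ∈ K := fun x hx ↦ by rw [hKsymm]; exact neg_mem_neg.2 hx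
  have h := four_mul_card_sub_one_le_sum_gauge_sub hK hsymm (q := ![q₁, q₂, q₃])
    (u := ![u₁, u₂, u₃]) (fun i ↦ by fin_cases i <;> simp [hq₁, hq₂, hq₃])
    (fun i ↦ by fin_cases i <;> assumption)
    (by rwa [Matrix.range_cons, Matrix.range_cons_cons_empty, singleton_union])
  simp only [Fin.sum_univ_three, Fintype.card_fin, Matrix.cons_val, sub_self, gauge_zero] at h
  rw [gauge_sub_comm hsymm q₁ q₂, gauge_sub_comm hsymm q₂ q₃, gauge_sub_comm hsymm q₃ q₁] at h
  norm_num at h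
  linarith

/-- If `q₁, q₂, q₃` are boundary points of a centrally symmetric convex body `K` such
that the closed triangle `q₁ q₂ q₃` has `K`-length strictly less than `4`, then for any
outer normals (supporting functionals) `u₁, u₂, u₃` of `K` at these points, `0` does not
lie in `conv{u₁, u₂, u₃}`. -/
theorem stmt16 {n : ℕ} (K : Set (EuclideanSpace ℝ (Fin n)))
    (hKconv : Convex ℝ K) (hKcpt : IsCompact K) (hK0 : (0 : EuclideanSpace ℝ (Fin n)) ∈ interior K)
    (hKsymm : K = -K)
    (q₁ q₂ q₃ : EuclideanSpace ℝ (Fin n))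
    (hq₁ : gauge K q₁ = 1) (hq₂ : gauge K q₂ = 1) (hq₃ : gauge K q₃ = 1)
    (hlen : gauge K (q₂ - q₁) + gauge K (q₃ - q₂) + gauge K (q₁ - q₃) < 4)
    (u₁ u₂ u₃ : EuclideanSpace ℝ (Fin n))
    (hu₁ : ⟪u₁, q₁⟫ = 1 ∧ ∀ y ∈ K, ⟪u₁, y⟫ ≤ 1)
    (hu₂ : ⟪u₂, q₂⟫ = 1 ∧ ∀ y ∈ K, ⟪u₂, y⟫ ≤ 1)
    (hu₃ : ⟪u₃, q₃⟫ = 1 ∧ ∀ y ∈ K, ⟪u₃, y⟫ ≤ 1) :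
    (0 : EuclideanSpace ℝ (Fin n)) ∉ convexHull ℝ {u₁, u₂, u₃} :=
  stmt16_general K hK0 hKsymm q₁ q₂ q₃ hq₁ hq₂ hq₃ hlen u₁ u₂ u₃ hu₁ hu₂ hu₃
end

section
/- Let K be a centrally symmetric convex body in ℝⁿ and suppose points q₁,…,q_m ∈ ∂K satisfy that their outer normals n_K(q_i) positively span a subspace W of ℝⁿ, with 0 in the relative interior of conv{n_K(q_i)}. Let π be the projection of ℝⁿ onto ℝⁿ/W^⊥ ≅ W with the quotient norm induced by ‖·‖_K. Then each π(q_i) lies on the boundary of the quotient unit ball π(K), and 0 lies in the convex hull of outer normals of π(K) at the points π(q_i). -/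
open scoped RealInnerProductSpace

section aux

variable {n : ℕ}

private lemma hasDerivAt_line17 (g : EuclideanSpace ℝ (Fin n) → ℝ)
    {q : EuclideanSpace ℝ (Fin n)} (hd : DifferentiableAt ℝ g q)
    (x : EuclideanSpace ℝ (Fin n)) :
    HasDerivAt (fun t : ℝ => g (q + t • x)) (fderiv ℝ g q x) 0 := by
  have h1 : HasDerivAt (fun t : ℝ => q + t • x) x 0 := by
    simpa using ((hasDerivAt_id (0:ℝ)).smul_const x).const_add q
  have h2 : HasFDerivAt g (fderiv ℝ g q) ((fun t : ℝ => q + t • x) 0) := by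
    simpa using hd.hasFDerivAt
  exact h2.comp_hasDerivAt 0 h1

private lemma fderiv_gauge_le17 (K : Set (EuclideanSpace ℝ (Fin n))) (hconv : Convex ℝ K)
    (habs : Absorbent ℝ K) {q : EuclideanSpace ℝ (Fin n)} (hq : gauge K q = 1)
    (hd : DifferentiableAt ℝ (gauge K) q) (x : EuclideanSpace ℝ (Fin n)) :
    fderiv ℝ (gauge K) q x ≤ gauge K x := by
  have hline := hasDerivAt_line17 (gauge K) hd x
  have hts := hasDerivAt_iff_tendsto_slope.mp hline
  have hts' : Filter.Tendsto (slope (fun t : ℝ => gauge K (q + t • x)) 0)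
      (nhdsWithin 0 (Set.Ioi 0)) (nhds (fderiv ℝ (gauge K) q x)) :=
    hts.mono_left (nhdsWithin_mono _ (fun t ht => ne_of_gt ht))
  refine le_of_tendsto hts' ?_
  filter_upwards [self_mem_nhdsWithin] with t (ht : t ∈ Set.Ioi 0)
  have ht0 : (0:ℝ) < t := ht
  have h1 : gauge K (q + t • x) ≤ 1 + t * gauge K x := by
    calc gauge K (q + t • x) ≤ gauge K q + gauge K (t • x) := gauge_add_le hconv habs _ _
    _ = 1 + t * gauge K x := by
        rw [hq, gauge_smul_of_nonneg ht0.le, smul_eq_mul]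
  have : slope (fun t : ℝ => gauge K (q + t • x)) 0 t
      = (gauge K (q + t • x) - 1) / t := by
    simp [slope_def_field, hq]
  rw [this, div_le_iff₀ ht0]
  linarith

private lemma fderiv_gauge_self17 (K : Set (EuclideanSpace ℝ (Fin n)))
    {q : EuclideanSpace ℝ (Fin n)} (hq : gauge K q = 1)
    (hd : DifferentiableAt ℝ (gauge K) q) :
    fderiv ℝ (gauge K) q q = 1 := by
  have hline := hasDerivAt_line17 (gauge K) hd q
  have heq : (fun t : ℝ => gauge K (q + t • q)) =ᶠ[nhds (0:ℝ)] fun t => 1 + t := by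
    filter_upwards [Metric.ball_mem_nhds (0:ℝ) one_pos] with t ht
    have habs : |t| < 1 := by simpa [Real.dist_eq] using ht
    have h1 : (0:ℝ) ≤ 1 + t := by
      have := abs_lt.mp habs; linarith [this.1]
    have h2 : q + t • q = (1 + t) • q := by rw [add_smul, one_smul]
    rw [h2, gauge_smul_of_nonneg h1, hq, smul_eq_mul, mul_one]
  have h2 : HasDerivAt (fun t : ℝ => 1 + t) 1 0 := by
    simpa using (hasDerivAt_id (0:ℝ)).const_add (1:ℝ)
  exact hline.unique (h2.congr_of_eventuallyEq heq)

end aux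

/-- Let `K` be a smooth centrally symmetric convex body in `ℝⁿ` and let
`q 0, …, q (m-1) ∈ ∂K` be boundary points whose outer normals `n_K(q i) = ∇g_K(q i)`
positively span the subspace `W` (i.e. `0` lies in the relative interior of their convex
hull and `W` is their span). Identify the quotient `ℝⁿ/W^⊥` with `W` via the orthogonal
projection `π` onto `W`; the quotient norm induced by `‖·‖_K` has unit ball `π(K)`.
Then each `π(q i)` lies on the boundary of `π(K)` (its gauge equals `1`), and `0` lies
in the convex hull of outer normals (supporting functionals, lying in `W`) of `π(K)` at
the points `π(q i)`. -/
theorem stmt17 {n m : ℕ} (K : Set (EuclideanSpace ℝ (Fin n)))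
    (hKconv : Convex ℝ K) (hKcpt : IsCompact K) (hK0 : (0 : EuclideanSpace ℝ (Fin n)) ∈ interior K)
    (hKsymm : K = -K)
    (hKsmooth : ContDiffOn ℝ (⊤ : ℕ∞) (gauge K) {(0 : EuclideanSpace ℝ (Fin n))}ᶜ)
    (hm : 1 ≤ m)
    (q : ℕ → EuclideanSpace ℝ (Fin n))
    (hbd : ∀ i < m, gauge K (q i) = 1)
    (nK : ℕ → EuclideanSpace ℝ (Fin n))
    (hnK : ∀ i < m, nK i = gradient (gauge K) (q i))
    (W : Submodule ℝ (EuclideanSpace ℝ (Fin n)))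
    (hW : W = Submodule.span ℝ (nK '' Set.Iio m))
    (h0 : (0 : EuclideanSpace ℝ (Fin n)) ∈
      intrinsicInterior ℝ (convexHull ℝ (nK '' Set.Iio m)))
    (π : EuclideanSpace ℝ (Fin n) → EuclideanSpace ℝ (Fin n))
    (hπ : ∀ e, π e = (W.orthogonalProjectionOnto e : EuclideanSpace ℝ (Fin n))) :
    (∀ i < m, gauge (π '' K) (π (q i)) = 1) ∧
    ∃ u : ℕ → EuclideanSpace ℝ (Fin n),
      (∀ i < m, u i ∈ W ∧ ⟪u i, π (q i)⟫ = 1 ∧ ∀ y ∈ π '' K, ⟪u i, y⟫ ≤ 1) ∧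
      (0 : EuclideanSpace ℝ (Fin n)) ∈ convexHull ℝ (u '' Set.Iio m) := by
  have hKnhds : K ∈ nhds (0 : EuclideanSpace ℝ (Fin n)) := mem_interior_iff_mem_nhds.mp hK0
  have habs : Absorbent ℝ K := absorbent_nhds_zero hKnhds
  have hKcl : IsClosed K := hKcpt.isClosed
  -- basic facts for each i
  have hqK : ∀ i < m, q i ∈ K := by
    intro i hi
    have := (gauge_le_one_iff_mem_closure hKconv hKnhds).mp (le_of_eq (hbd i hi))
    rwa [hKcl.closure_eq] at this
  have hq0 : ∀ i < m, q i ≠ 0 := by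
    intro i hi h
    have := hbd i hi
    rw [h, gauge_zero] at this
    norm_num at this
  have hdiff : ∀ i < m, DifferentiableAt ℝ (gauge K) (q i) := by
    intro i hi
    exact (hKsmooth.contDiffAt (IsOpen.mem_nhds isOpen_compl_singleton (hq0 i hi))).differentiableAt
      (by simp)
  have hinner : ∀ i < m, ∀ x, ⟪nK i, x⟫ = fderiv ℝ (gauge K) (q i) x := by
    intro i hi x
    rw [hnK i hi]
    exact InnerProductSpace.toDual_symm_apply
  have hWmem : ∀ i < m, nK i ∈ W := by
    intro i hi
    rw [hW]
    exact Submodule.subset_span ⟨i, hi, rfl⟩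
  have hprojinner : ∀ i < m, ∀ x, ⟪nK i, π x⟫ = ⟪nK i, x⟫ := by
    intro i hi x
    rw [hπ x]
    have h1 : x - (W.orthogonalProjectionOnto x : EuclideanSpace ℝ (Fin n)) ∈ Wᗮ :=
      W.sub_starProjection_mem_orthogonal x
    have h2 : ⟪nK i, x - (W.orthogonalProjectionOnto x : EuclideanSpace ℝ (Fin n))⟫ = 0 :=
      (Submodule.mem_orthogonal W _).mp h1 (nK i) (hWmem i hi)
    rw [inner_sub_right] at h2
    linarith
  have key1 : ∀ i < m, ⟪nK i, π (q i)⟫ = 1 := by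
    intro i hi
    rw [hprojinner i hi, hinner i hi]
    exact fderiv_gauge_self17 K (hbd i hi) (hdiff i hi)
  have key2 : ∀ i < m, ∀ y ∈ π '' K, ⟪nK i, y⟫ ≤ 1 := by
    rintro i hi y ⟨x, hx, rfl⟩
    rw [hprojinner i hi, hinner i hi]
    calc fderiv ℝ (gauge K) (q i) x ≤ gauge K x :=
          fderiv_gauge_le17 K hKconv habs (hbd i hi) (hdiff i hi) x
    _ ≤ 1 := gauge_le_one_of_mem hx
  constructor
  · intro i hi
    refine le_antisymm (gauge_le_one_of_mem ⟨q i, hqK i hi, rfl⟩) ?_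
    rw [gauge]
    refine le_csInf ⟨1, one_pos, Set.mem_smul_set.mpr ⟨π (q i), Set.mem_image_of_mem π (hqK i hi), one_smul ℝ _⟩⟩ ?_
    rintro r ⟨hr, hmem⟩
    obtain ⟨y, hy, hry⟩ := hmem
    have h1 : (1:ℝ) = r * ⟪nK i, y⟫ := by
      rw [← key1 i hi, ← hry, real_inner_smul_right]
    have h2 : ⟪nK i, y⟫ ≤ 1 := key2 i hi y hy
    nlinarith
  · refine ⟨nK, fun i hi => ⟨hWmem i hi, key1 i hi, key2 i hi⟩, ?_⟩
    exact intrinsicInterior_subset h0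
end
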